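/- arXiv:2111.05435 — 8 statements merged into one kernel-verified Lean document; each statement's English description precedes it below -/
import Mathlib

section
/- Let V and W be sets and f : V × W → ℝ a function. If f is δ-stable (i.e., (ℕ,δ)-stable with respect to the standard order on ℕ), then f is (I,δ)-stable for every infinite linear order I; conversely, if f is (I,δ)-stable for all infinite linear orders I, then f is δ-stable. -/
/-- A function `f : V × W → ℝ` is `δ`-stable (i.e. `(ℕ,δ)`-stable) iff it is
`(I,δ)`-stable for every infinite linear order `I`. -/
theorem delta_stable_iff_all_infinite_orders {V W : Type*} (f : V → W → ℝ) (δ : ℝ)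
    (hδ : 0 ≤ δ) :
    (¬ ∃ (a : ℕ → V) (b : ℕ → W), ∀ i j : ℕ, i < j →
        δ ≤ |f (a i) (b j) - f (a j) (b i)|) ↔
    ∀ (I : Type) [LinearOrder I] [Infinite I],
      ¬ ∃ (a : I → V) (b : I → W), ∀ i j : I, i < j →
        δ ≤ |f (a i) (b j) - f (a j) (b i)| := by
  constructor
  · intro h I _ _ ⟨a, b, hab⟩
    apply h
    -- embed ℕ into I and extract a monotone subsequence
    let e : ℕ ↪ I := Infinite.natEmbedding I
    obtain ⟨g, hg | hg⟩ :=
      exists_increasing_or_nonincreasing_subseq (· < · : I → I → Prop) (fun n => e n)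
    · exact ⟨fun n => a (e (g n)), fun n => b (e (g n)),
        fun i j hij => hab _ _ (hg i j hij)⟩
    · refine ⟨fun n => a (e (g n)), fun n => b (e (g n)), fun i j hij => ?_⟩
      have hlt : e (g j) < e (g i) := by
        rcases lt_trichotomy (e (g j)) (e (g i)) with h' | h' | h'
        · exact h'
        · exact absurd (g.injective (e.injective h')) (by omega)
        · exact absurd h' (hg i j hij)
      rw [abs_sub_comm]
      exact hab _ _ hlt
  · intro h hn
    exact h ℕ hn
end

section
/- For any k ≥ 1 and real numbers δ' > δ > 0, there exists ℓ ≥ 1 such that every *(k,δ)-stable function f : V × W → [0,1] (for any sets V, W) is (ℓ,δ')-stable. -/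
/-!
Colour each pair `i < j` of a long `δ'`-separated sequence `(a i, b i)` by which of
`f (a i) (b j)`, `f (a j) (b i)` is larger and by the interval of width `1/m ≤ δ' - δ`
containing the smaller one. Ramsey's theorem yields a monochromatic subsequence of length `2k`,
possibly after reversal oriented so that `f (a p) (b q)` is the larger value for `p < q`. With
`r` the right end of the common interval, every smaller value is `≤ r` and every larger one is
`≥ r + δ`; taking the `a`'s at even and the `b`'s at odd positions gives a `*(k,δ)`-pattern.
-/

open Finset

section Ramsey

variable {α κ : Type*} [LinearOrder α] [Fintype κ] [Nonempty κ]

theorem exists_strictMono_pairColor_eq_left (C : α → α → κ) {t : ℕ} {S : Finset α}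
    (hS : (Fintype.card κ + 1) ^ t ≤ #S) :
    ∃ x : Fin t → α, StrictMono x ∧ (∀ i, x i ∈ S) ∧
      ∃ g : Fin t → κ, ∀ i j, i < j → C (x i) (x j) = g i := by
  classical
  induction t generalizing S with
  | zero => exact ⟨Fin.elim0, fun i => i.elim0, fun i => i.elim0, Fin.elim0, fun i => i.elim0⟩
  | succ t ih =>
    have hS₀ : S.Nonempty := card_pos.1 (lt_of_lt_of_le (by positivity) hS)
    set x₀ := S.min' hS₀
    -- every later element is coloured by its pair with `x₀`; keep the most popular colour
    have hfiber : #(univ : Finset κ) * (Fintype.card κ + 1) ^ t ≤ #(S.erase x₀) := by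
      rw [card_erase_of_mem (S.min'_mem hS₀), card_univ]
      have : 0 < (Fintype.card κ + 1) ^ t := by positivity
      rw [pow_succ, mul_add_one, mul_comm] at hS
      omega
    obtain ⟨γ, -, hγ⟩ := exists_le_card_fiber_of_mul_le_card_of_maps_to
      (f := C x₀) (fun _ _ => mem_univ _) univ_nonempty hfiber
    obtain ⟨x, hx, hxS, g, hg⟩ := ih hγ
    have hxS' : ∀ i, x i ∈ S.erase x₀ ∧ C x₀ (x i) = γ := fun i => mem_filter.1 (hxS i)
    refine ⟨Fin.cons x₀ x, Fin.strictMono_cons.2 ⟨fun i => ?_, hx⟩, ?_, Fin.cons γ g, ?_⟩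
    · obtain ⟨hne, hmem⟩ := mem_erase.1 (hxS' i).1
      exact lt_of_le_of_ne (S.min'_le _ hmem) (Ne.symm hne)
    · exact Fin.cases (S.min'_mem hS₀) fun i => mem_of_mem_erase (hxS' i).1
    · intro i j hij
      induction j using Fin.cases with
      | zero => exact absurd hij (Fin.not_lt_zero i)
      | succ j =>
        induction i using Fin.cases with
        | zero => exact (hxS' j).2
        | succ i => exact hg i j (Fin.succ_lt_succ_iff.1 hij)

theorem exists_strictMono_pairColor_eq [Fintype α] {s : ℕ}
    (hα : (Fintype.card κ + 1) ^ (Fintype.card κ * s) ≤ Fintype.card α) (C : α → α → κ) :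
    ∃ y : Fin s → α, StrictMono y ∧ ∃ γ : κ, ∀ p q, p < q → C (y p) (y q) = γ := by
  classical
  obtain ⟨x, hx, -, g, hg⟩ := exists_strictMono_pairColor_eq_left C hα
  obtain ⟨γ, -, hγ⟩ := exists_le_card_fiber_of_mul_le_card_of_maps_to
    (s := univ) (t := univ) (n := s) (f := g) (fun _ _ => mem_univ _) univ_nonempty (by simp)
  set e := orderEmbOfCardLe _ hγ
  refine ⟨x ∘ e, hx.comp e.strictMono, γ, fun p q hpq => ?_⟩
  rw [Function.comp_apply, Function.comp_apply, hg _ _ (e.strictMono hpq)]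
  exact (mem_filter.1 (orderEmbOfCardLe_mem _ hγ p)).2

end Ramsey

theorem mem_Ioc_floor_mul_add_one_div {K : Type*} [Field K] [LinearOrder K]
    [IsStrictOrderedRing K] [FloorSemiring K] {v : K} (hv : 0 ≤ v) {m : ℕ} (hm : 0 < m) :
    (⌊v * m⌋₊ + 1 : K) / m ∈ Set.Ioc v (v + 1 / m) := by
  have hm' : (0 : K) < m := Nat.cast_pos.2 hm
  constructor
  · rw [lt_div_iff₀ hm']
    exact Nat.lt_floor_add_one _
  · rw [div_le_iff₀ hm', add_mul, one_div_mul_cancel hm'.ne']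
    linarith [Nat.floor_le (mul_nonneg hv hm'.le)]

theorem min_le_and_add_le_max_of_floor_mul_eq {K : Type*} [Field K] [LinearOrder K]
    [IsStrictOrderedRing K] [FloorSemiring K] {u u' δ δ' : K} {m t : ℕ} (hm : 0 < m)
    (hmδ : 1 / (m : K) ≤ δ' - δ) (h₀ : 0 ≤ min u u') (ht : ⌊min u u' * m⌋₊ = t)
    (hgap : δ' ≤ |u - u'|) :
    min u u' ≤ (t + 1 : K) / m ∧ (t + 1 : K) / m + δ ≤ max u u' := by
  have hr := mem_Ioc_floor_mul_add_one_div h₀ hm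
  rw [ht] at hr
  rw [← max_sub_min_eq_abs'] at hgap
  exact ⟨hr.1.le, by linarith [hr.2]⟩

section Interleave

variable {V W : Type*} {k : ℕ}

theorem exists_interleaved_of_forall_lt {P Q : V → W → Prop} (a : Fin (2 * k) → V)
    (b : Fin (2 * k) → W) (h : ∀ p q, p < q → P (a p) (b q) ∧ Q (a q) (b p)) :
    ∃ (a' : Fin k → V) (b' : Fin k → W),
      ∀ i j, (i ≤ j → P (a' i) (b' j)) ∧ (j < i → Q (a' i) (b' j)) := by
  refine ⟨fun i => a ⟨2 * i, by omega⟩, fun j => b ⟨2 * j + 1, by omega⟩, fun i j => ⟨?_, ?_⟩⟩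
  · exact fun hij => (h _ _ (Fin.mk_lt_mk.2 (by rw [Fin.le_def] at hij; omega))).1
  · exact fun hji => (h _ _ (Fin.mk_lt_mk.2 (by rw [Fin.lt_def] at hji; omega))).2

theorem exists_ladder_of_separated {f : V → W → ℝ} {r δ : ℝ} (a : Fin (2 * k) → V)
    (b : Fin (2 * k) → W) (β : Bool)
    (hβ : ∀ p q, p < q → decide (f (a q) (b p) ≤ f (a p) (b q)) = β)
    (hsep : ∀ p q, p < q → min (f (a p) (b q)) (f (a q) (b p)) ≤ r ∧
      r + δ ≤ max (f (a p) (b q)) (f (a q) (b p))) :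
    ∃ (a' : Fin k → V) (b' : Fin k → W),
      ∀ i j, (i ≤ j → r + δ ≤ f (a' i) (b' j)) ∧ (j < i → f (a' i) (b' j) ≤ r) := by
  cases β with
  | true =>
    refine exists_interleaved_of_forall_lt (P := fun v w => r + δ ≤ f v w)
      (Q := fun v w => f v w ≤ r) a b fun p q hpq => ?_
    have hle := of_decide_eq_true (hβ p q hpq)
    simpa [min_eq_right hle, max_eq_left hle, and_comm] using hsep p q hpq
  | false =>
    refine exists_interleaved_of_forall_lt (P := fun v w => r + δ ≤ f v w)
      (Q := fun v w => f v w ≤ r) (a ∘ Fin.rev) (b ∘ Fin.rev) fun p q hpq => ?_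
    have hpq' : q.rev < p.rev := Fin.rev_lt_rev.2 hpq
    have hlt := le_of_lt (not_le.1 (of_decide_eq_false (hβ _ _ hpq')))
    simpa [min_eq_left hlt, max_eq_right hlt, and_comm] using hsep _ _ hpq'

end Interleave

/-- For any `k ≥ 1` and `δ' > δ > 0` there is `ℓ ≥ 1` such that every `*(k,δ)`-stable
`[0,1]`-valued function is `(ℓ,δ')`-stable. -/
theorem star_stable_implies_stable (k : ℕ) (hk : 1 ≤ k) (δ δ' : ℝ)
    (hδ : 0 < δ) (hδ' : δ < δ') :
    ∃ ℓ : ℕ, 1 ≤ ℓ ∧ ∀ (V W : Type) (f : V → W → ℝ),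
      (∀ a b, f a b ∈ Set.Icc (0:ℝ) 1) →
      (¬ ∃ (a : Fin k → V) (b : Fin k → W) (r : ℝ), r ∈ Set.Icc (0:ℝ) 1 ∧
        ∀ i j : Fin k, (i ≤ j → r + δ ≤ f (a i) (b j)) ∧ (j < i → f (a i) (b j) ≤ r)) →
      ¬ ∃ (a : Fin ℓ → V) (b : Fin ℓ → W), ∀ i j : Fin ℓ, i < j →
        δ' ≤ |f (a i) (b j) - f (a j) (b i)| := by
  obtain ⟨n, hn⟩ := exists_nat_one_div_lt (sub_pos.2 hδ')
  set m := n + 1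
  have hm : 1 / (m : ℝ) ≤ δ' - δ := by push_cast [m]; exact hn.le
  set c := Fintype.card (Bool × Fin (m + 1))
  refine ⟨(c + 1) ^ (c * (2 * k)), Nat.one_le_pow _ _ (Nat.succ_pos c), ?_⟩
  rintro V W f hf hstar ⟨a, b, hab⟩
  let C : Fin _ → Fin _ → Bool × Fin (m + 1) := fun i j =>
    (decide (f (a j) (b i) ≤ f (a i) (b j)),
      ⟨⌊min (f (a i) (b j)) (f (a j) (b i)) * m⌋₊, Nat.lt_succ_of_le <| Nat.floor_le_of_le <|
        mul_le_of_le_one_left m.cast_nonneg ((min_le_left _ _).trans (hf _ _).2)⟩)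
  obtain ⟨y, hy, ⟨β, t⟩, hC⟩ :=
    exists_strictMono_pairColor_eq (s := 2 * k) (Fintype.card_fin _).ge C
  set r : ℝ := ((t : ℕ) + 1) / m
  have hsep : ∀ p q, p < q → min (f (a (y p)) (b (y q))) (f (a (y q)) (b (y p))) ≤ r ∧
      r + δ ≤ max (f (a (y p)) (b (y q))) (f (a (y q)) (b (y p))) := fun p q hpq =>
    min_le_and_add_le_max_of_floor_mul_eq (Nat.succ_pos n) hm (le_min (hf _ _).1 (hf _ _).1)
      (congrArg (Fin.val ∘ Prod.snd) (hC p q hpq)) (hab _ _ (hy hpq))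
  obtain ⟨a', b', hladder⟩ := exists_ladder_of_separated (a ∘ y) (b ∘ y) β
    (fun p q hpq => congrArg Prod.fst (hC p q hpq)) hsep
  have hr₁ : r ≤ 1 := by
    linarith [(hladder ⟨0, hk⟩ ⟨0, hk⟩).1 le_rfl, (hf (a' ⟨0, hk⟩) (b' ⟨0, hk⟩)).2]
  exact hstar ⟨a', b', r, ⟨by positivity, hr₁⟩, hladder⟩
end

section
/- Let V, W be finite nonempty sets and f : V × W → [0,1]. Suppose (V,W) is (δ;γ,ε)-homogeneous witnessed by constants r and s. Then the normalized ℓ¹-distances satisfy ‖f − r‖₁ ≤ δ + γ + ε and ‖f − s‖₁ ≤ δ + γ + ε, and consequently |r − s| ≤ 2(δ + γ + ε). -/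
open scoped Classical

private lemma inner_bound {V : Type*} [Fintype V] (g : V → ℝ) (δ ε : ℝ)
    (hδ : 0 ≤ δ) (hg : ∀ a, |g a| ≤ 1)
    (h : (1 - ε) * (Fintype.card V : ℝ) ≤
      ((Finset.univ.filter fun a : V => |g a| ≤ δ).card : ℝ)) :
    ∑ a, |g a| ≤ (δ + ε) * Fintype.card V := by
  classical
  set S : Finset V := Finset.univ.filter fun a => |g a| ≤ δ with hS
  have hsplit : ∑ a ∈ S, |g a| + ∑ a ∈ Sᶜ, |g a| = ∑ a, |g a| :=
    Finset.sum_add_sum_compl S _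
  have h1 : ∑ a ∈ S, |g a| ≤ (S.card : ℝ) * δ := by
    have := Finset.sum_le_card_nsmul S (fun a => |g a|) δ
      (fun a ha => (Finset.mem_filter.mp ha).2)
    simpa [nsmul_eq_mul] using this
  have h2 : ∑ a ∈ Sᶜ, |g a| ≤ ((Sᶜ).card : ℝ) * 1 := by
    have := Finset.sum_le_card_nsmul Sᶜ (fun a => |g a|) 1
      (fun a _ => hg a)
    simpa [nsmul_eq_mul] using this
  have hle : S.card ≤ Fintype.card V := by
    simpa [Finset.card_univ] using S.card_le_univ
  have hcard : ((Sᶜ).card : ℝ) = (Fintype.card V : ℝ) - S.card := by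
    rw [Finset.card_compl, Nat.cast_sub hle]
  have hScard : (S.card : ℝ) ≤ (Fintype.card V : ℝ) := by exact_mod_cast hle
  nlinarith [h, hsplit, h1, h2, hcard, hScard]

private lemma outer_bound {W : Type*} [Fintype W] (h : W → ℝ) (δ ε γ m : ℝ)
    (hδ : 0 ≤ δ) (hε : 0 ≤ ε) (hγ : 0 ≤ γ) (hm : 0 ≤ m)
    (W' : Finset W) (hW' : (1 - γ) * (Fintype.card W : ℝ) ≤ (W'.card : ℝ))
    (hgood : ∀ b ∈ W', h b ≤ (δ + ε) * m) (hall : ∀ b, h b ≤ m) :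
    ∑ b, h b ≤ (δ + γ + ε) * (m * (Fintype.card W : ℝ)) := by
  classical
  have hsplit : ∑ b ∈ W', h b + ∑ b ∈ W'ᶜ, h b = ∑ b, h b :=
    Finset.sum_add_sum_compl W' _
  have h1 : ∑ b ∈ W', h b ≤ (W'.card : ℝ) * ((δ + ε) * m) := by
    have := Finset.sum_le_card_nsmul W' h ((δ + ε) * m) (fun b hb => hgood b hb)
    simpa [nsmul_eq_mul] using this
  have h2 : ∑ b ∈ W'ᶜ, h b ≤ ((W'ᶜ).card : ℝ) * m := by
    have := Finset.sum_le_card_nsmul W'ᶜ h m (fun b _ => hall b)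
    simpa [nsmul_eq_mul] using this
  have hle : W'.card ≤ Fintype.card W := by
    simpa [Finset.card_univ] using W'.card_le_univ
  have hcard : ((W'ᶜ).card : ℝ) = (Fintype.card W : ℝ) - W'.card := by
    rw [Finset.card_compl, Nat.cast_sub hle]
  have hWcard : (W'.card : ℝ) ≤ (Fintype.card W : ℝ) := by exact_mod_cast hle
  have hc2 : ((W'ᶜ).card : ℝ) ≤ γ * (Fintype.card W : ℝ) := by nlinarith [hcard, hW']
  have b1 : ∑ b ∈ W', h b ≤ (Fintype.card W : ℝ) * ((δ + ε) * m) :=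
    h1.trans (mul_le_mul_of_nonneg_right hWcard (by positivity))
  have b2 : ∑ b ∈ W'ᶜ, h b ≤ (γ * (Fintype.card W : ℝ)) * m :=
    h2.trans (mul_le_mul_of_nonneg_right hc2 hm)
  have hring : (δ + γ + ε) * (m * (Fintype.card W : ℝ)) =
      (Fintype.card W : ℝ) * ((δ + ε) * m) + (γ * (Fintype.card W : ℝ)) * m := by ring
  linarith

/-- If the pair `(V,W)` is `(δ;γ,ε)`-homogeneous witnessed by `r` and `s`, then the
normalized ℓ¹-distances `‖f - r‖₁` and `‖f - s‖₁` are at most `δ + γ + ε`, and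
consequently `|r - s| ≤ 2(δ + γ + ε)`. -/
theorem homogeneous_l1_bounds {V W : Type*} [Fintype V] [Fintype W] [Nonempty V] [Nonempty W]
    (f : V → W → ℝ) (hf : ∀ a b, f a b ∈ Set.Icc (0:ℝ) 1)
    (δ γ ε : ℝ) (hδ : 0 ≤ δ) (hγ : 0 ≤ γ) (hε : 0 ≤ ε)
    (r s : ℝ) (hr : r ∈ Set.Icc (0:ℝ) 1) (hs : s ∈ Set.Icc (0:ℝ) 1)
    (V' : Finset V) (W' : Finset W)
    (hV' : (1 - γ) * (Fintype.card V : ℝ) ≤ (V'.card : ℝ))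
    (hW' : (1 - γ) * (Fintype.card W : ℝ) ≤ (W'.card : ℝ))
    (hrow : ∀ b ∈ W', (1 - ε) * (Fintype.card V : ℝ) ≤
      ((Finset.univ.filter fun a : V => |f a b - r| ≤ δ).card : ℝ))
    (hcol : ∀ a ∈ V', (1 - ε) * (Fintype.card W : ℝ) ≤
      ((Finset.univ.filter fun b : W => |f a b - s| ≤ δ).card : ℝ)) :
    (∑ a : V, ∑ b : W, |f a b - r|) / ((Fintype.card V : ℝ) * (Fintype.card W : ℝ))
        ≤ δ + γ + ε ∧
    (∑ a : V, ∑ b : W, |f a b - s|) / ((Fintype.card V : ℝ) * (Fintype.card W : ℝ))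
        ≤ δ + γ + ε ∧
    |r - s| ≤ 2 * (δ + γ + ε) := by
  classical
  set m : ℝ := (Fintype.card V : ℝ) with hm
  set n : ℝ := (Fintype.card W : ℝ) with hn
  have hmpos : 0 < m := by
    rw [hm]; exact_mod_cast Fintype.card_pos
  have hnpos : 0 < n := by
    rw [hn]; exact_mod_cast Fintype.card_pos
  have habsr : ∀ a b, |f a b - r| ≤ 1 := by
    intro a b
    obtain ⟨h1, h2⟩ := hf a b
    obtain ⟨h3, h4⟩ := hr
    rw [abs_sub_le_iff]; constructor <;> linarith
  have habss : ∀ a b, |f a b - s| ≤ 1 := by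
    intro a b
    obtain ⟨h1, h2⟩ := hf a b
    obtain ⟨h3, h4⟩ := hs
    rw [abs_sub_le_iff]; constructor <;> linarith
  -- bound for r
  have hA : ∑ a : V, ∑ b : W, |f a b - r| ≤ (δ + γ + ε) * (m * n) := by
    rw [Finset.sum_comm]
    exact outer_bound (fun b => ∑ a : V, |f a b - r|) δ ε γ m hδ hε hγ hmpos.le W' hW'
      (fun b hb => inner_bound (fun a => f a b - r) δ ε hδ (fun a => habsr a b) (hrow b hb))
      (fun b => by
        have := Finset.sum_le_card_nsmul Finset.univ (fun a => |f a b - r|) 1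
          (fun a _ => habsr a b)
        simpa [nsmul_eq_mul, Finset.card_univ, hm] using this)
  have hB : ∑ a : V, ∑ b : W, |f a b - s| ≤ (δ + γ + ε) * (n * m) := by
    exact outer_bound (fun a => ∑ b : W, |f a b - s|) δ ε γ n hδ hε hγ hnpos.le V' hV'
      (fun a ha => inner_bound (fun b => f a b - s) δ ε hδ (fun b => habss a b) (hcol a ha))
      (fun a => by
        have := Finset.sum_le_card_nsmul Finset.univ (fun b => |f a b - s|) 1
          (fun b _ => habss a b)
        simpa [nsmul_eq_mul, Finset.card_univ, hn] using this)
  have hprod : 0 < m * n := mul_pos hmpos hnpos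
  have hA' : (∑ a : V, ∑ b : W, |f a b - r|) / (m * n) ≤ δ + γ + ε := by
    rw [div_le_iff₀ hprod]; linarith
  have hB' : (∑ a : V, ∑ b : W, |f a b - s|) / (m * n) ≤ δ + γ + ε := by
    rw [div_le_iff₀ hprod]; nlinarith
  refine ⟨hA', hB', ?_⟩
  have key : m * n * |r - s| ≤ (∑ a : V, ∑ b : W, |f a b - r|) +
      (∑ a : V, ∑ b : W, |f a b - s|) := by
    have hpt : ∀ a b, |r - s| ≤ |f a b - r| + |f a b - s| := by
      intro a b
      have := abs_sub_le r (f a b) s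
      rw [abs_sub_comm r (f a b)] at this
      exact this
    calc m * n * |r - s| = ∑ _a : V, ∑ _b : W, |r - s| := by
          simp [Finset.sum_const, Finset.card_univ, hm, hn, nsmul_eq_mul]; ring
      _ ≤ ∑ a : V, ∑ b : W, (|f a b - r| + |f a b - s|) := by
          apply Finset.sum_le_sum; intro a _
          apply Finset.sum_le_sum; intro b _
          exact hpt a b
      _ = _ := by rw [← Finset.sum_add_distrib]; simp [Finset.sum_add_distrib]
  have hsum0 : 0 ≤ ∑ a : V, ∑ b : W, |f a b - r| := by positivity
  have hsum0' : 0 ≤ ∑ a : V, ∑ b : W, |f a b - s| := by positivity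
  nlinarith [key, hA, hB]
end

section
/- Let X, V, W be finite nonempty sets and let g : X × V → [−1,1], h : X × W → [−1,1] be arbitrary functions. Define f : V × W → [−1,1] by f(a,b) = (1/|X|) Σ_{x∈X} g(x,a)h(x,b). Then for every δ > 0 there exists k ≥ 1, depending only on δ (not on X, V, W, g, h), such that f is (k,δ)-stable. -/
/-!
Each `g(·, a)` and `h(·, b)`, divided by `√|X|`, is a vector of the unit ball of `ℝ^X`, and
`f(a, b)` is their inner product, so it suffices that the inner product on the unit ball of a
real inner product space is stable, with `k` depending only on `δ`.

Suppose `x i, y i` (`i < k`) lie in the unit ball with `|⟪x i, y j⟫ - ⟪x j, y i⟫| ≥ δ` for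
`i < j`. Colouring each pair `i < j` by the rounded values of `⟪x i, x j⟫, ⟪y i, y j⟫,
⟪x i, y j⟫, ⟪x j, y i⟫` and applying Ramsey's theorem, we find `4n` indices on which all four
are constant up to `1/n`. Split them into four consecutive blocks of `n` and let `X_r, Y_r` be
the block sums. Since the Gram matrices are nearly constant off the diagonal, the zero-sum
combinations `X₀ - X₂` and `Y₁ - Y₃` have norm `O(√n)`, so their inner product is `O(n)`; but
expanding it gives `n² (c₁ - c₂) + O(n)`, where `c₁ ≈ ⟪x i, y j⟫` and `c₂ ≈ ⟪x j, y i⟫` for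
`i < j` and `|c₁ - c₂| ≥ δ`. This is impossible once `n > 12 / δ`.
-/

open Finset Filter
open scoped RealInnerProductSpace

universe u

theorem exists_minHomogeneous (C : Type*) [Fintype C] (M : ℕ) :
    ∃ K : ℕ, ∀ {α : Type u} [LinearOrder α] (c : α → α → C) (S : Finset α), K ≤ #S →
      ∃ x : Fin M → α, StrictMono x ∧ (∀ i, x i ∈ S) ∧
        ∃ col : Fin M → C, ∀ i j, i < j → c (x i) (x j) = col i := by
  classical
  induction M with
  | zero => exact ⟨0, fun _ _ _ => ⟨Fin.elim0, fun i => i.elim0, fun i => i.elim0, Fin.elim0,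
      fun i => i.elim0⟩⟩
  | succ M ih =>
    obtain ⟨K, hK⟩ := ih
    refine ⟨Fintype.card C * K + 2, fun {α} _ c S hS => ?_⟩
    have hSne : S.Nonempty := card_pos.1 (by omega)
    set a := S.min' hSne
    obtain ⟨c₀, -, hc₀⟩ := exists_lt_card_fiber_of_mul_lt_card_of_maps_to
      (f := c a) (s := S.erase a) (n := K) (t := univ) (fun _ _ => mem_univ _)
      (by rw [card_univ, card_erase_of_mem (S.min'_mem hSne)]; omega)
    obtain ⟨x, hx, hxS, col, hcol⟩ := hK c _ hc₀.le
    have hxS' : ∀ i, x i ∈ S.erase a ∧ c a (x i) = c₀ := fun i => by simpa using hxS i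
    refine ⟨Fin.cons a x, Fin.strictMono_cons.2 ⟨fun i => ?_, hx⟩, Fin.cons (S.min'_mem hSne)
      fun i => mem_of_mem_erase (hxS' i).1, Fin.cons c₀ col, ?_⟩
    · exact lt_of_le_of_ne (S.min'_le _ (mem_of_mem_erase (hxS' i).1))
        (ne_of_mem_erase (hxS' i).1).symm
    · intro i j hij
      induction i using Fin.cases with
      | zero =>
        induction j using Fin.cases with
        | zero => exact absurd hij (lt_irrefl 0)
        | succ j => exact (hxS' j).2
      | succ i =>
        induction j using Fin.cases with
        | zero => exact absurd hij (Fin.succ_pos i).not_gt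
        | succ j => exact hcol i j (Fin.succ_lt_succ_iff.1 hij)

theorem exists_monochromatic_pairs (C : Type*) [Fintype C] (m : ℕ) :
    ∃ K : ℕ, ∀ {α : Type u} [LinearOrder α] [Fintype α], K ≤ Fintype.card α →
      ∀ c : α → α → C, ∃ x : Fin m → α, StrictMono x ∧
        ∀ i j i' j', i < j → i' < j' → c (x i) (x j) = c (x i') (x j') := by
  classical
  obtain ⟨K, hK⟩ := exists_minHomogeneous.{u} C (Fintype.card C * m + 1)
  refine ⟨K, fun {α} _ _ hα c => ?_⟩
  obtain ⟨x, hx, -, col, hcol⟩ := hK c univ hα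
  obtain ⟨c₀, hc₀⟩ := Fintype.exists_lt_card_fiber_of_mul_lt_card col (n := m)
    (by simp only [Fintype.card_fin]; omega)
  set F := ({i | col i = c₀} : Finset _)
  let e : Fin m → Fin (Fintype.card C * m + 1) := F.orderEmbOfFin rfl ∘ Fin.castLE hc₀.le
  have he : StrictMono e := (F.orderEmbOfFin rfl).strictMono.comp (Fin.strictMono_castLE _)
  have hcol₀ : ∀ i, col (e i) = c₀ := fun i => (mem_filter.1 (F.orderEmbOfFin_mem rfl _)).2
  refine ⟨x ∘ e, hx.comp he, fun i j i' j' hij hij' => ?_⟩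
  simp only [Function.comp_apply, hcol _ _ (he hij), hcol _ _ (he hij'), hcol₀]

-- The clamping to `[-n, n]` only makes the set of values finite: it is inactive on `[-1, 1]`.
noncomputable def quantize (n : ℕ) (r : ℝ) : Set.Icc (-(n : ℤ)) n :=
  Set.projIcc _ _ (by omega) ⌊r * n⌋

theorem abs_sub_lt_of_quantize_eq {n : ℕ} (hn : 0 < n) {r s : ℝ} (hr : |r| ≤ 1) (hs : |s| ≤ 1)
    (h : quantize n r = quantize n s) : |r - s| < 1 / n := by
  have hn' : (0 : ℝ) < n := Nat.cast_pos.2 hn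
  have mem : ∀ t : ℝ, |t| ≤ 1 → ⌊t * n⌋ ∈ Set.Icc (-(n : ℤ)) n := fun t ht => by
    obtain ⟨ht₁, ht₂⟩ := abs_le.1 ht
    constructor
    · exact Int.le_floor.2 (by push_cast; nlinarith)
    · exact Int.floor_le_iff.2 (by push_cast; nlinarith)
  rw [quantize, quantize, Set.projIcc_of_mem _ (mem r hr), Set.projIcc_of_mem _ (mem s hs),
    Subtype.mk.injEq] at h
  rw [lt_div_iff₀ hn', ← abs_of_pos hn', ← abs_mul, sub_mul]
  exact Int.abs_sub_lt_one_of_floor_eq_floor h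

def NearlyConstOnPairs {α : Type*} [LT α] (f : α → α → ℝ) (ε : ℝ) : Prop :=
  ∀ i j i' j', i < j → i' < j' → |f i j - f i' j'| ≤ ε

theorem NearlyConstOnPairs.abs_sub_le_of_ne {α : Type*} [LinearOrder α] {f : α → α → ℝ} {ε : ℝ}
    (hf : NearlyConstOnPairs f ε) (hsymm : ∀ a b, f a b = f b a) {i j a b : α} (hij : i < j)
    (hab : a ≠ b) : |f a b - f i j| ≤ ε := by
  rcases hab.lt_or_gt with h | h
  · exact hf a b i j h hij
  · rw [hsymm]
    exact hf b a i j h hij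

theorem nearlyConstOnPairs_of_quantize_eq {α : Type*} [LT α] {n : ℕ} (hn : 0 < n)
    {f : α → α → ℝ} (hf : ∀ i j, |f i j| ≤ 1)
    (h : ∀ i j i' j', i < j → i' < j' → quantize n (f i j) = quantize n (f i' j')) :
    NearlyConstOnPairs f (1 / n) := fun i j i' j' hij hij' =>
  (abs_sub_lt_of_quantize_eq hn (hf i j) (hf i' j') (h i j i' j' hij hij')).le

theorem sum_prod_fst {ι : Type*} [Fintype ι] {k : ℕ} (F : Fin k → ℝ) :
    ∑ p : Fin k × ι, F p.1 = Fintype.card ι * ∑ r, F r := by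
  rw [Fintype.sum_prod_type, mul_sum]
  simp

theorem finProdFinEquiv_lt_of_fst_lt {m n : ℕ} {p q : Fin m × Fin n} (h : p.1 < q.1) :
    finProdFinEquiv p < finProdFinEquiv q := by
  rw [Fin.lt_def] at h ⊢
  have := Nat.mul_le_mul_left n (Nat.succ_le_of_lt h)
  simp only [finProdFinEquiv_apply_val]
  rw [Nat.mul_succ] at this
  omega

section InnerProduct

variable {E : Type*} [NormedAddCommGroup E] [InnerProductSpace ℝ E]

theorem real_inner_sum_smul_sum_smul {ι κ : Type*} [Fintype ι] [Fintype κ] (u : ι → ℝ)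
    (w : κ → ℝ) (x : ι → E) (y : κ → E) :
    ⟪∑ i, u i • x i, ∑ j, w j • y j⟫ = ∑ i, ∑ j, u i * w j * ⟪x i, y j⟫ := by
  rw [sum_inner]
  simp only [inner_sum, real_inner_smul_left, real_inner_smul_right]
  exact sum_congr rfl fun _ _ => sum_congr rfl fun _ _ => by ring

theorem norm_sum_smul_sq_le {ι : Type*} [Fintype ι] (x : ι → E) (u : ι → ℝ) {α ε : ℝ}
    (hε : 0 ≤ ε) (hx : ∀ i, ‖x i‖ ≤ 1) (hα : |α| ≤ 1)
    (hxx : ∀ i j, i ≠ j → |⟪x i, x j⟫ - α| ≤ ε) (hu : ∑ i, u i = 0) :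
    ‖∑ i, u i • x i‖ ^ 2 ≤ 2 * ∑ i, u i ^ 2 + ε * (∑ i, |u i|) ^ 2 := by
  classical
  -- since `∑ u = 0`, the constant part `α` of the Gram matrix contributes nothing
  have expand : ‖∑ i, u i • x i‖ ^ 2 = ∑ i, ∑ j, u i * u j * (⟪x i, x j⟫ - α) := by
    have hα0 : ∑ i, ∑ j, u i * u j * α = 0 := by
      simp only [← sum_mul, ← mul_sum, hu, mul_zero, zero_mul, sum_const_zero]
    rw [← real_inner_self_eq_norm_sq, real_inner_sum_smul_sum_smul, ← sub_zero (∑ i, _), ← hα0,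
      ← sum_sub_distrib]
    exact sum_congr rfl fun _ _ => by rw [← sum_sub_distrib]; simp only [mul_sub]
  have term : ∀ i j, u i * u j * (⟪x i, x j⟫ - α) ≤
      |u i| * |u j| * ε + if i = j then 2 * u i ^ 2 else 0 := by
    intro i j
    refine (le_abs_self _).trans ?_
    rw [abs_mul, abs_mul]
    split_ifs with hij
    · subst hij
      have hdiag : |⟪x i, x i⟫ - α| ≤ 2 := by
        rw [real_inner_self_eq_norm_sq]
        have := hx i
        have := norm_nonneg (x i)
        refine (abs_sub _ _).trans ?_
        rw [abs_of_nonneg (by positivity)]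
        nlinarith
      have := mul_le_mul_of_nonneg_left hdiag (mul_nonneg (abs_nonneg (u i)) (abs_nonneg (u i)))
      nlinarith [sq_abs (u i), mul_nonneg (mul_nonneg (abs_nonneg (u i)) (abs_nonneg (u i))) hε]
    · nlinarith [hxx i j hij, mul_nonneg (abs_nonneg (u i)) (abs_nonneg (u j))]
  calc ‖∑ i, u i • x i‖ ^ 2
      ≤ ∑ i, ∑ j, (|u i| * |u j| * ε + if i = j then 2 * u i ^ 2 else 0) :=
        expand ▸ sum_le_sum fun i _ => sum_le_sum fun j _ => term i j
    _ = 2 * ∑ i, u i ^ 2 + ε * (∑ i, |u i|) ^ 2 := by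
        simp only [sum_add_distrib, sum_ite_eq, mem_univ, if_true, ← sum_mul, ← mul_sum]
        ring

theorem norm_sum_fst_smul_sq_le {ι : Type*} [Fintype ι] {k : ℕ} (x : Fin k × ι → E)
    (U : Fin k → ℝ) {α ε : ℝ} (hε : 0 ≤ ε) (hx : ∀ p, ‖x p‖ ≤ 1) (hα : |α| ≤ 1)
    (hxx : ∀ p q, p ≠ q → |⟪x p, x q⟫ - α| ≤ ε) (hU : ∑ r, U r = 0) :
    ‖∑ p, U p.1 • x p‖ ^ 2 ≤ 2 * Fintype.card ι * ∑ r, U r ^ 2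
      + ε * Fintype.card ι ^ 2 * (∑ r, |U r|) ^ 2 := by
  have := norm_sum_smul_sq_le x (fun p => U p.1) hε hx hα hxx (by rw [sum_prod_fst, hU, mul_zero])
  rw [sum_prod_fst (fun r => U r ^ 2), sum_prod_fst (fun r => |U r|)] at this
  linarith

theorem abs_sum_sum_fst_inner_sub_le {ι : Type*} [Fintype ι] {k : ℕ} (x y : Fin k × ι → E)
    (U W : Fin k → ℝ) {c₁ c₂ ε : ℝ} (hε : 0 ≤ ε) (hUW : ∀ r, U r * W r = 0)
    (h₁ : ∀ p q : Fin k × ι, p.1 < q.1 → |⟪x p, y q⟫ - c₁| ≤ ε)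
    (h₂ : ∀ p q : Fin k × ι, q.1 < p.1 → |⟪x p, y q⟫ - c₂| ≤ ε) :
    |∑ p, ∑ q, U p.1 * W q.1 * ⟪x p, y q⟫
        - Fintype.card ι ^ 2 * ∑ r, ∑ r', U r * W r' * (if r < r' then c₁ else c₂)|
      ≤ ε * Fintype.card ι ^ 2 * (∑ r, |U r|) * (∑ r, |W r|) := by
  set n : ℝ := (Fintype.card ι : ℝ)
  set c : Fin k → Fin k → ℝ := fun r r' => if r < r' then c₁ else c₂
  have sum_blocks : ∀ G : Fin k → Fin k → ℝ,
      ∑ p : Fin k × ι, ∑ q : Fin k × ι, G p.1 q.1 = n ^ 2 * ∑ r, ∑ r', G r r' := fun G => by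
    rw [sum_congr rfl fun p _ => sum_prod_fst (G p.1), sum_prod_fst (fun r => n * ∑ r', G r r'),
      ← mul_sum, ← mul_assoc, sq]
  rw [← sum_blocks fun r r' => U r * W r' * c r r', ← sum_sub_distrib]
  calc _ ≤ ∑ p : Fin k × ι, ∑ q : Fin k × ι, |U p.1| * |W q.1| * ε := by
        refine (abs_sum_le_sum_abs _ _).trans (sum_le_sum fun p _ => ?_)
        rw [← sum_sub_distrib]
        refine (abs_sum_le_sum_abs _ _).trans (sum_le_sum fun q _ => ?_)
        rw [← mul_sub, abs_mul, abs_mul]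
        rcases lt_trichotomy p.1 q.1 with h | h | h
        · simp only [c, if_pos h]
          exact mul_le_mul_of_nonneg_left (h₁ p q h) (by positivity)
        · rw [← abs_mul, h, hUW, abs_zero, zero_mul]
          positivity
        · simp only [c, if_neg h.not_gt]
          exact mul_le_mul_of_nonneg_left (h₂ p q h) (by positivity)
    _ = ε * n ^ 2 * (∑ r, |U r|) * (∑ r, |W r|) := by
        rw [sum_blocks fun r r' => |U r| * |W r'| * ε]
        simp only [← sum_mul, ← mul_sum]
        ring

theorem card_sq_mul_abs_sub_le_of_four_blocks {ι : Type*} [Fintype ι] (x y : Fin 4 × ι → E) {α β c₁ c₂ ε : ℝ}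
    (hε : 0 ≤ ε) (hx : ∀ p, ‖x p‖ ≤ 1) (hy : ∀ p, ‖y p‖ ≤ 1) (hα : |α| ≤ 1) (hβ : |β| ≤ 1)
    (hxx : ∀ p q, p ≠ q → |⟪x p, x q⟫ - α| ≤ ε) (hyy : ∀ p q, p ≠ q → |⟪y p, y q⟫ - β| ≤ ε)
    (h₁ : ∀ p q : Fin 4 × ι, p.1 < q.1 → |⟪x p, y q⟫ - c₁| ≤ ε)
    (h₂ : ∀ p q : Fin 4 × ι, q.1 < p.1 → |⟪x p, y q⟫ - c₂| ≤ ε) :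
    (Fintype.card ι : ℝ) ^ 2 * |c₁ - c₂| ≤ 4 * Fintype.card ι + 8 * Fintype.card ι ^ 2 * ε := by
  set U : Fin 4 → ℝ := ![1, 0, -1, 0]
  set W : Fin 4 → ℝ := ![0, 1, 0, -1]
  have hU₂ : ∑ r, U r ^ 2 = 2 := by simp [U, Fin.sum_univ_four]; norm_num
  have hW₂ : ∑ r, W r ^ 2 = 2 := by simp [W, Fin.sum_univ_four]; norm_num
  have hU₁ : ∑ r, |U r| = 2 := by simp [U, Fin.sum_univ_four]; norm_num
  have hW₁ : ∑ r, |W r| = 2 := by simp [W, Fin.sum_univ_four]; norm_num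
  have hUWc : ∑ r, ∑ r', U r * W r' * (if r < r' then c₁ else c₂) = c₁ - c₂ := by
    simp [U, W, Fin.sum_univ_four]; ring
  have hX := norm_sum_fst_smul_sq_le x U hε hx hα hxx (by simp [U, Fin.sum_univ_four])
  have hY := norm_sum_fst_smul_sq_le y W hε hy hβ hyy (by simp [W, Fin.sum_univ_four])
  have happrox := abs_sum_sum_fst_inner_sub_le x y U W hε (fun r => by fin_cases r <;> simp [U, W])
    h₁ h₂
  rw [hU₂, hU₁] at hX
  rw [hW₂, hW₁] at hY
  rw [← real_inner_sum_smul_sum_smul, hUWc, hU₁, hW₁, abs_sub_comm] at happrox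
  have hCS : |⟪∑ p, U p.1 • x p, ∑ q, W q.1 • y q⟫|
      ≤ 4 * Fintype.card ι + 4 * Fintype.card ι ^ 2 * ε := by
    refine (abs_real_inner_le_norm _ _).trans ?_
    nlinarith [sq_nonneg (‖∑ p, U p.1 • x p‖ - ‖∑ q, W q.1 • y q‖)]
  have h := abs_sub_abs_le_abs_sub ((Fintype.card ι : ℝ) ^ 2 * (c₁ - c₂))
    ⟪∑ p, U p.1 • x p, ∑ q, W q.1 • y q⟫
  rw [abs_mul, abs_of_nonneg (sq_nonneg _)] at h
  linarith

theorem abs_real_inner_le_one {x y : E} (hx : ‖x‖ ≤ 1) (hy : ‖y‖ ≤ 1) : |⟪x, y⟫| ≤ 1 :=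
  (abs_real_inner_le_norm x y).trans (mul_le_one₀ hx (norm_nonneg y) hy)

theorem sq_mul_abs_inner_sub_le {n : ℕ} (x y : Fin (4 * n) → E) {ε : ℝ} (hε : 0 ≤ ε)
    (hx : ∀ i, ‖x i‖ ≤ 1) (hy : ∀ i, ‖y i‖ ≤ 1)
    (hxx : NearlyConstOnPairs (fun i j => ⟪x i, x j⟫) ε)
    (hyy : NearlyConstOnPairs (fun i j => ⟪y i, y j⟫) ε)
    (hxy : NearlyConstOnPairs (fun i j => ⟪x i, y j⟫) ε)
    (hyx : NearlyConstOnPairs (fun i j => ⟪x j, y i⟫) ε) {i j : Fin (4 * n)} (hij : i < j) :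
    (n : ℝ) ^ 2 * |⟪x i, y j⟫ - ⟪x j, y i⟫| ≤ 4 * n + 8 * n ^ 2 * ε := by
  set e : Fin 4 × Fin n ≃ Fin (4 * n) := finProdFinEquiv
  simpa using card_sq_mul_abs_sub_le_of_four_blocks (x ∘ e) (y ∘ e) hε (fun p => hx (e p)) (fun p => hy (e p))
    (abs_real_inner_le_one (hx i) (hx j)) (abs_real_inner_le_one (hy i) (hy j))
    (fun p q hpq => hxx.abs_sub_le_of_ne (fun _ _ => real_inner_comm _ _) hij (e.injective.ne hpq))
    (fun p q hpq => hyy.abs_sub_le_of_ne (fun _ _ => real_inner_comm _ _) hij (e.injective.ne hpq))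
    (fun p q hpq => hxy _ _ _ _ (finProdFinEquiv_lt_of_fst_lt hpq) hij)
    (fun p q hpq => hyx _ _ _ _ (finProdFinEquiv_lt_of_fst_lt hpq) hij)

end InnerProduct

def IsStable {V W : Type*} (k : ℕ) (δ : ℝ) (f : V → W → ℝ) : Prop :=
  ¬ ∃ (a : Fin k → V) (b : Fin k → W), ∀ i j, i < j → δ ≤ |f (a i) (b j) - f (a j) (b i)|

theorem IsStable.comp {V W V' W' : Type*} {k : ℕ} {δ : ℝ} {f : V → W → ℝ} (hf : IsStable k δ f)
    (φ : V' → V) (ψ : W' → W) : IsStable k δ fun a b => f (φ a) (ψ b) :=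
  fun ⟨a, b, hab⟩ => hf ⟨φ ∘ a, ψ ∘ b, hab⟩

theorem eventually_isStable_inner {δ : ℝ} (hδ : 0 < δ) :
    ∀ᶠ k in atTop, ∀ (E : Type u) [NormedAddCommGroup E] [InnerProductSpace ℝ E],
      IsStable k δ fun v w : Metric.closedBall (0 : E) 1 => ⟪(v : E), w⟫ := by
  obtain ⟨n, hn⟩ := exists_nat_gt (12 / δ)
  have hn₀ : 0 < n := by exact_mod_cast (div_pos (by norm_num) hδ).trans hn
  let Q := Set.Icc (-(n : ℤ)) n
  obtain ⟨K, hK⟩ := exists_monochromatic_pairs (Q × Q × Q × Q) (4 * n)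
  filter_upwards [eventually_ge_atTop K] with k hk E _ _
  rintro ⟨a, b, hab⟩
  let x : Fin k → E := fun i => a i
  let y : Fin k → E := fun i => b i
  have hx : ∀ i, ‖x i‖ ≤ 1 := fun i => mem_closedBall_zero_iff.1 (a i).2
  have hy : ∀ i, ‖y i‖ ≤ 1 := fun i => mem_closedBall_zero_iff.1 (b i).2
  obtain ⟨φ, hφ, hmono⟩ := hK (by simpa using hk) fun i j =>
    (quantize n ⟪x i, x j⟫, quantize n ⟪y i, y j⟫, quantize n ⟪x i, y j⟫, quantize n ⟪x j, y i⟫)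
  simp only [Prod.mk.injEq] at hmono
  have h01 : (⟨0, by omega⟩ : Fin (4 * n)) < ⟨1, by omega⟩ := Fin.mk_lt_mk.2 one_pos
  have hbound := sq_mul_abs_inner_sub_le (x ∘ φ) (y ∘ φ) (by positivity)
    (fun i => hx (φ i)) (fun i => hy (φ i))
    (nearlyConstOnPairs_of_quantize_eq hn₀ (fun i j => abs_real_inner_le_one (hx _) (hx _))
      fun i j i' j' h h' => (hmono i j i' j' h h').1)
    (nearlyConstOnPairs_of_quantize_eq hn₀ (fun i j => abs_real_inner_le_one (hy _) (hy _))
      fun i j i' j' h h' => (hmono i j i' j' h h').2.1)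
    (nearlyConstOnPairs_of_quantize_eq hn₀ (fun i j => abs_real_inner_le_one (hx _) (hy _))
      fun i j i' j' h h' => (hmono i j i' j' h h').2.2.1)
    (nearlyConstOnPairs_of_quantize_eq hn₀ (fun i j => abs_real_inner_le_one (hx _) (hy _))
      fun i j i' j' h h' => (hmono i j i' j' h h').2.2.2) h01
  have hn' : (0 : ℝ) < n := by exact_mod_cast hn₀
  simp only [Function.comp_apply, show 8 * (n : ℝ) ^ 2 * (1 / n) = 8 * n by field_simp] at hbound
  rw [div_lt_iff₀ hδ] at hn
  nlinarith [mul_le_mul_of_nonneg_left (hab _ _ (hφ h01)) (sq_nonneg (n : ℝ)),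
    mul_lt_mul_of_pos_left hn hn']

noncomputable def normalizedVector {X : Type*} [Fintype X] (u : X → ℝ) : EuclideanSpace ℝ X :=
  (√(Fintype.card X))⁻¹ • WithLp.toLp 2 u

theorem inner_normalizedVector {X : Type*} [Fintype X] (u v : X → ℝ) :
    ⟪normalizedVector u, normalizedVector v⟫ = (∑ x, u x * v x) / Fintype.card X := by
  rw [normalizedVector, normalizedVector, real_inner_smul_left, real_inner_smul_right,
    EuclideanSpace.inner_toLp_toLp, ← mul_assoc, ← sq, inv_pow, Real.sq_sqrt (Nat.cast_nonneg _),
    inv_mul_eq_div]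
  simp [dotProduct, mul_comm]

theorem norm_normalizedVector_le_one {X : Type*} [Fintype X] {u : X → ℝ}
    (hu : ∀ x, u x ∈ Set.Icc (-1 : ℝ) 1) : ‖normalizedVector u‖ ≤ 1 := by
  have hsq : ‖normalizedVector u‖ ^ 2 ≤ 1 := by
    rw [← real_inner_self_eq_norm_sq, inner_normalizedVector]
    refine div_le_one_of_le₀ ?_ (Nat.cast_nonneg _)
    calc ∑ x, u x * u x ≤ ∑ _x : X, (1 : ℝ) :=
          sum_le_sum fun x _ => by nlinarith [(hu x).1, (hu x).2]
      _ = Fintype.card X := by simp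
  exact (sq_le_one_iff₀ (norm_nonneg _)).1 hsq

/-- For every `δ > 0` there is `k ≥ 1` such that for all finite nonempty `X`, `V`, `W`
and all `[-1,1]`-valued `g : X × V → ℝ`, `h : X × W → ℝ`, the averaged product function
`f(a,b) = (1/|X|) Σ_x g(x,a) h(x,b)` is `(k,δ)`-stable. -/
theorem averaged_product_stable (δ : ℝ) (hδ : 0 < δ) :
    ∃ k : ℕ, 1 ≤ k ∧
      ∀ (X V W : Type) [Fintype X] [Nonempty X] [Fintype V] [Nonempty V]
        [Fintype W] [Nonempty W] (g : X → V → ℝ) (h : X → W → ℝ),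
        (∀ x a, g x a ∈ Set.Icc (-1:ℝ) 1) →
        (∀ x b, h x b ∈ Set.Icc (-1:ℝ) 1) →
        ¬ ∃ (a : Fin k → V) (b : Fin k → W), ∀ i j : Fin k, i < j →
          δ ≤ |(∑ x : X, g x (a i) * h x (b j)) / (Fintype.card X : ℝ) -
               (∑ x : X, g x (a j) * h x (b i)) / (Fintype.card X : ℝ)| := by
  obtain ⟨k, hstable, hk⟩ := ((eventually_isStable_inner hδ).and (eventually_ge_atTop 1)).exists
  refine ⟨k, hk, fun X V W _ _ _ _ _ _ g h hg hh => ?_⟩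
  have := (hstable (EuclideanSpace ℝ X)).comp
    (fun a => ⟨normalizedVector (g · a), mem_closedBall_zero_iff.2 <|
      norm_normalizedVector_le_one fun x => hg x a⟩)
    (fun b => ⟨normalizedVector (h · b), mem_closedBall_zero_iff.2 <|
      norm_normalizedVector_le_one fun x => hh x b⟩)
  simpa only [IsStable, inner_normalizedVector] using this
end

section
/- For every δ > 0 there exists k ≥ 1 such that for every Hilbert space H with closed unit ball U, for all sets V, W and functions g : V → U, h : W → U, the function f(a,b) = ⟨g(a), h(b)⟩ is (k,δ)-stable; i.e., there are no a_1,…,a_k ∈ V and b_1,…,b_k ∈ W with |⟨g(a_i),h(b_j)⟩ − ⟨g(a_j),h(b_i)⟩| ≥ δ for all i < j. -/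
/-!
Call a sequence `(uᵢ, vᵢ)` in the unit ball a skew `δ`-chain when
`⟪uᵢ, vⱼ⟫ - ⟪uⱼ, vᵢ⟫ ≥ δ` for all `i < j`. Averaging consecutive pairs of a skew `δ`-chain of
length `2^(N+1)` gives a skew `δ`-chain of length `2^N`, and by the parallelogram law the energy
`‖uᵢ‖² + ‖vᵢ‖²` drops by `δ²/8`, since the gap `⟪u₀, v₁⟫ - ⟪u₁, v₀⟫ ≥ δ` forces the two averaged
points apart. The energy starts at most `2`, so chains of length `2^N` need `N δ² ≤ 16`.

If the gaps are only large in absolute value, orient each pair `i, j` in the direction in which the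
gap is `≥ δ`. This is a tournament on `k` vertices, and a tournament on `2^r` vertices contains a
transitive one on `r` vertices, which is a skew `δ`-chain. Hence `k = 2^(2^N)` works once
`N δ² > 16`.
-/

open Finset
open scoped RealInnerProductSpace

theorem Finset.exists_list_pairwise_of_total {α : Type*} {R : α → α → Prop}
    (hR : ∀ x y, x ≠ y → R x y ∨ R y x) (r : ℕ) :
    ∀ S : Finset α, 2 ^ r ≤ #S → ∃ l : List α, l.length = r ∧ (∀ x ∈ l, x ∈ S) ∧ l.Pairwise R := by
  classical
  induction r with
  | zero => exact fun _ _ => ⟨[], rfl, by simp, .nil⟩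
  | succ r ih =>
    intro S hS
    obtain ⟨x, hx⟩ : S.Nonempty := card_pos.mp (lt_of_lt_of_le (by positivity) hS)
    set Out := (S.erase x).filter (R x ·)
    set In := (S.erase x).filter (¬R x ·)
    have hcard : #Out + #In = #S - 1 := by
      rw [card_filter_add_card_filter_not, card_erase_of_mem hx]
    rcases le_or_gt (2 ^ r) #Out with hOut | hIn
    · obtain ⟨l, hlen, hlS, hl⟩ := ih Out hOut
      refine ⟨x :: l, by simp [hlen], ?_, List.pairwise_cons.mpr ⟨?_, hl⟩⟩
      · intro y hy
        rcases List.mem_cons.mp hy with rfl | hy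
        · exact hx
        · exact mem_of_mem_erase (mem_filter.mp (hlS y hy)).1
      · exact fun y hy => (mem_filter.mp (hlS y hy)).2
    · obtain ⟨l, hlen, hlS, hl⟩ := ih In (by rw [pow_succ] at hS; omega)
      refine ⟨l ++ [x], by simp [hlen], ?_, List.pairwise_append.mpr ⟨hl, by simp, ?_⟩⟩
      · intro y hy
        rcases List.mem_append.mp hy with hy | hy
        · exact mem_of_mem_erase (mem_filter.mp (hlS y hy)).1
        · exact List.mem_singleton.mp hy ▸ hx
      · intro y hy z hz
        obtain ⟨hyx, hxy⟩ := mem_filter.mp (hlS y hy)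
        rw [List.mem_singleton.mp hz]
        exact (hR y x (ne_of_mem_erase hyx)).resolve_right hxy

section SkewChain

variable {E : Type*} [NormedAddCommGroup E] [InnerProductSpace ℝ E]

def skewGap (u v : ℕ → E) (i j : ℕ) : ℝ := ⟪u i, v j⟫ - ⟪u j, v i⟫

noncomputable def pairAvg (u : ℕ → E) (s : ℕ) : E := (2 : ℝ)⁻¹ • (u (2 * s) + u (2 * s + 1))

theorem norm_inv_two_smul_add_sq (a b : E) :
    ‖(2 : ℝ)⁻¹ • (a + b)‖ ^ 2 = (‖a‖ ^ 2 + ‖b‖ ^ 2) / 2 - ‖a - b‖ ^ 2 / 4 := by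
  have := parallelogram_law_with_norm ℝ a b
  rw [norm_smul, mul_pow]
  norm_num
  linarith

theorem inner_sub_inner_le_norm_sub_add_norm_sub {a b c d : E} (hb : ‖b‖ ≤ 1) (hd : ‖d‖ ≤ 1) :
    ⟪a, d⟫ - ⟪b, c⟫ ≤ ‖a - b‖ + ‖c - d‖ :=
  calc ⟪a, d⟫ - ⟪b, c⟫ = ⟪a - b, d⟫ - ⟪b, c - d⟫ := by
        rw [inner_sub_left, inner_sub_right]; ring
    _ ≤ ‖a - b‖ * ‖d‖ + ‖b‖ * ‖c - d‖ := by
        have := real_inner_le_norm (a - b) d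
        have := neg_le_of_abs_le (abs_real_inner_le_norm b (c - d))
        linarith
    _ ≤ ‖a - b‖ + ‖c - d‖ := by
        gcongr
        · exact mul_le_of_le_one_right (norm_nonneg _) hd
        · exact mul_le_of_le_one_left (norm_nonneg _) hb

theorem norm_pairAvg_le_one {u : ℕ → E} (hu : ∀ i, ‖u i‖ ≤ 1) (s : ℕ) : ‖pairAvg u s‖ ≤ 1 := by
  rw [pairAvg, norm_smul]
  have := norm_add_le (u (2 * s)) (u (2 * s + 1))
  have := hu (2 * s)
  have := hu (2 * s + 1)
  norm_num
  linarith

theorem skewGap_pairAvg (u v : ℕ → E) (s t : ℕ) :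
    skewGap (pairAvg u) (pairAvg v) s t =
      (skewGap u v (2 * s) (2 * t) + skewGap u v (2 * s) (2 * t + 1) +
        skewGap u v (2 * s + 1) (2 * t) + skewGap u v (2 * s + 1) (2 * t + 1)) / 4 := by
  simp only [skewGap, pairAvg, inner_smul_left, inner_smul_right, inner_add_left,
    inner_add_right, RCLike.conj_to_real]
  ring

theorem norm_pairAvg_sq_add_le {u v : ℕ → E} {δ M : ℝ} (hδ : 0 ≤ δ)
    (hu : ∀ i, ‖u i‖ ≤ 1) (hv : ∀ i, ‖v i‖ ≤ 1) {s : ℕ}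
    (hM₀ : ‖u (2 * s)‖ ^ 2 + ‖v (2 * s)‖ ^ 2 ≤ M)
    (hM₁ : ‖u (2 * s + 1)‖ ^ 2 + ‖v (2 * s + 1)‖ ^ 2 ≤ M)
    (hgap : δ ≤ skewGap u v (2 * s) (2 * s + 1)) :
    ‖pairAvg u s‖ ^ 2 + ‖pairAvg v s‖ ^ 2 ≤ M - δ ^ 2 / 8 := by
  have hsep := hgap.trans
    (inner_sub_inner_le_norm_sub_add_norm_sub (c := v (2 * s)) (hu (2 * s + 1)) (hv (2 * s + 1)))
  rw [pairAvg, pairAvg, norm_inv_two_smul_add_sq, norm_inv_two_smul_add_sq]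
  nlinarith [sq_nonneg (‖u (2 * s) - u (2 * s + 1)‖ - ‖v (2 * s) - v (2 * s + 1)‖)]

theorem natCast_mul_sq_le_of_skewGap {δ : ℝ} (hδ : 0 ≤ δ) (N : ℕ) {u v : ℕ → E} {M : ℝ}
    (hu : ∀ i, ‖u i‖ ≤ 1) (hv : ∀ i, ‖v i‖ ≤ 1) (hM : ∀ i < 2 ^ N, ‖u i‖ ^ 2 + ‖v i‖ ^ 2 ≤ M)
    (hgap : ∀ i j, i < j → j < 2 ^ N → δ ≤ skewGap u v i j) :
    N * (δ ^ 2 / 8) ≤ M := by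
  induction N generalizing u v M with
  | zero =>
    have := hM 0 one_pos
    push_cast
    nlinarith
  | succ N ih =>
    have hlt : ∀ s < 2 ^ N, 2 * s + 1 < 2 ^ (N + 1) := fun s hs => by rw [pow_succ]; omega
    have := ih (norm_pairAvg_le_one hu) (norm_pairAvg_le_one hv) (M := M - δ ^ 2 / 8)
      (fun s hs => norm_pairAvg_sq_add_le hδ hu hv (hM _ (by have := hlt s hs; omega))
        (hM _ (hlt s hs)) (hgap _ _ (by omega) (hlt s hs)))
      (fun s t hst ht => by
        rw [skewGap_pairAvg]
        have := hgap (2 * s) (2 * t) (by omega) (by have := hlt t ht; omega)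
        have := hgap (2 * s) (2 * t + 1) (by omega) (hlt t ht)
        have := hgap (2 * s + 1) (2 * t) (by omega) (by have := hlt t ht; omega)
        have := hgap (2 * s + 1) (2 * t + 1) (by omega) (hlt t ht)
        linarith)
    push_cast
    linarith

theorem natCast_mul_sq_le_of_pairwise {δ : ℝ} (hδ : 0 ≤ δ) {l : List (E × E)}
    (hball : ∀ p ∈ l, ‖p.1‖ ≤ 1 ∧ ‖p.2‖ ≤ 1)
    (hl : l.Pairwise fun p q => δ ≤ ⟪p.1, q.2⟫ - ⟪q.1, p.2⟫) {N : ℕ} (hN : 2 ^ N ≤ l.length) :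
    N * δ ^ 2 ≤ 16 := by
  set u : ℕ → E := fun n => (l.getD n 0).1
  set v : ℕ → E := fun n => (l.getD n 0).2
  have hget : ∀ n, ‖u n‖ ≤ 1 ∧ ‖v n‖ ≤ 1 := by
    intro n
    rcases lt_or_ge n l.length with hn | hn
    · simp only [u, v]
      rw [List.getD_eq_getElem _ _ hn]
      exact hball _ (List.getElem_mem hn)
    · simp only [u, v]
      rw [List.getD_eq_default _ _ hn]
      simp
  have := natCast_mul_sq_le_of_skewGap hδ N (fun n => (hget n).1) (fun n => (hget n).2)
    (M := 2) (fun i _ => by nlinarith [hget i, norm_nonneg (u i), norm_nonneg (v i)])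
    (fun i j hij hj => by
      simp only [skewGap, u, v]
      rw [List.getD_eq_getElem _ _ (hij.trans (hj.trans_le hN)),
        List.getD_eq_getElem _ _ (hj.trans_le hN)]
      exact List.pairwise_iff_getElem.mp hl i j _ _ hij)
  linarith

end SkewChain

/-- For every `δ > 0` there is `k ≥ 1` such that for every real Hilbert space `H`,
all maps `g : V → H`, `h : W → H` into the unit ball, the function
`f(a,b) = ⟨g a, h b⟩` is `(k,δ)`-stable. -/
theorem inner_product_stable (δ : ℝ) (hδ : 0 < δ) :
    ∃ k : ℕ, 1 ≤ k ∧
      ∀ (H : Type) [NormedAddCommGroup H] [InnerProductSpace ℝ H] [CompleteSpace H]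
        (V W : Type) (g : V → H) (h : W → H),
        (∀ a, ‖g a‖ ≤ 1) → (∀ b, ‖h b‖ ≤ 1) →
        ¬ ∃ (a : Fin k → V) (b : Fin k → W), ∀ i j : Fin k, i < j →
          δ ≤ |(inner ℝ (g (a i)) (h (b j)) : ℝ) - (inner ℝ (g (a j)) (h (b i)) : ℝ)| := by
  obtain ⟨N, hN⟩ := exists_nat_gt (16 / δ ^ 2)
  refine ⟨2 ^ 2 ^ N, Nat.one_le_two_pow, ?_⟩
  rintro H _ _ _ V W g h hg hh ⟨a, b, hab⟩
  set R : Fin (2 ^ 2 ^ N) → Fin (2 ^ 2 ^ N) → Prop :=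
    fun i j => δ ≤ ⟪g (a i), h (b j)⟫ - ⟪g (a j), h (b i)⟫
  have horient : ∀ i j, i < j → R i j ∨ R j i := fun i j hij =>
    (le_abs'.mp (hab i j hij)).symm.imp id fun hle => by simp only [R]; linarith
  have htotal : ∀ i j, i ≠ j → R i j ∨ R j i := fun i j hij =>
    hij.lt_or_gt.elim (horient i j) fun hji => (horient j i hji).symm
  obtain ⟨l, hlen, -, hl⟩ := exists_list_pairwise_of_total htotal (2 ^ N) univ (by simp)
  have := natCast_mul_sq_le_of_pairwise hδ.le (l := l.map fun i => (g (a i), h (b i)))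
    (N := N) (by simp [hg, hh]) (List.pairwise_map.mpr hl) (by simp [hlen])
  rw [div_lt_iff₀ (by positivity)] at hN
  linarith
end

section
/- Let X be a compact topometric space with lower semi-continuous metric d, μ a regular Borel probability measure on X, and δ > 0. Suppose every closed set C ⊆ X with μ(C) > 0 contains a closed subset C' with μ(C') > 0 and diam(C') ≤ δ. Then there is a countable family (C_i)_{i∈I} of pairwise disjoint closed sets, each with μ(C_i) > 0 and diam(C_i) ≤ δ, such that μ(⋃_{i∈I} C_i) = 1, and hence μ = Σ_{i∈I} μ(C_i) · μ_{C_i}. -/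
/-!
By Zorn's lemma there is a maximal pairwise disjoint family of closed sets of positive measure
and diameter at most `δ`; in a finite measure space such a family is countable. If its union
missed a set of positive measure, inner regularity would give a closed set of positive measure
in the complement, and the hypothesis a small closed piece of it that could be added to the
family. So the union has full measure, and `μ Y` splits as the sum of the `μ (Y ∩ Cᵢ)`.
-/

open MeasureTheory Set Function

theorem exists_maximal_pairwiseDisjoint {α : Type*} (P : Set α → Prop) :
    ∃ 𝒞 : Set (Set α), Maximal (fun 𝒟 => (∀ C ∈ 𝒟, P C) ∧ 𝒟.PairwiseDisjoint id) 𝒞 := by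
  refine zorn_subset _ fun c hc hchain => ⟨⋃₀ c, ⟨?_, ?_⟩, fun _ => subset_sUnion_of_mem⟩
  · rintro C ⟨𝒟, h𝒟, hC⟩
    exact (hc h𝒟).1 C hC
  · exact (hchain.pairwiseDisjoint_sUnion id).2 fun 𝒟 h𝒟 => (hc h𝒟).2

namespace MeasureTheory

variable {α : Type*} [MeasurableSpace α] {μ : Measure α}

theorem Measure.countable_of_pairwiseDisjoint_of_measure_pos [SFinite μ] {𝒞 : Set (Set α)}
    (hdisj : 𝒞.PairwiseDisjoint id) (hmeas : ∀ C ∈ 𝒞, MeasurableSet C)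
    (hpos : ∀ C ∈ 𝒞, 0 < μ C) : 𝒞.Countable := by
  have := Measure.countable_meas_pos_of_disjoint_iUnion (μ := μ) (As := ((↑) : 𝒞 → Set α))
    (fun C => hmeas C C.2) fun C D hCD => hdisj C.2 D.2 (Subtype.coe_ne_coe.2 hCD)
  rw [← countable_coe_iff, ← countable_univ_iff]
  exact this.mono fun C _ => hpos C C.2

theorem measure_compl_sUnion_eq_zero_of_maximal {P : Set α → Prop} {𝒞 : Set (Set α)}
    (hne : ∀ C, P C → C.Nonempty)
    (hfind : ∀ A, MeasurableSet A → 0 < μ A → ∃ C ⊆ A, P C)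
    (h𝒞 : Maximal (fun 𝒟 => (∀ C ∈ 𝒟, P C) ∧ 𝒟.PairwiseDisjoint id) 𝒞)
    (hmeas : MeasurableSet (⋃₀ 𝒞)) : μ (⋃₀ 𝒞)ᶜ = 0 := by
  by_contra h
  obtain ⟨C, hCsub, hC⟩ := hfind _ hmeas.compl (pos_iff_ne_zero.2 h)
  have hCdisj : ∀ D ∈ 𝒞, Disjoint C D := fun D hD =>
    disjoint_left.2 fun x hxC hxD => hCsub hxC (subset_sUnion_of_mem hD hxD)
  have hins : (∀ D ∈ insert C 𝒞, P D) ∧ (insert C 𝒞).PairwiseDisjoint id :=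
    ⟨forall_mem_insert.2 ⟨hC, h𝒞.prop.1⟩,
      h𝒞.prop.2.insert fun D hD _ => hCdisj D hD⟩
  have hmem : C ∈ 𝒞 := h𝒞.2 hins (subset_insert C 𝒞) (mem_insert C 𝒞)
  obtain ⟨x, hx⟩ := hne C hC
  exact hCsub hx (subset_sUnion_of_mem hmem hx)

theorem exists_countable_pairwise_disjoint_conull [SFinite μ] (P : Set α → Prop)
    (hP : ∀ C, P C → MeasurableSet C ∧ 0 < μ C)
    (hfind : ∀ A, MeasurableSet A → 0 < μ A → ∃ C ⊆ A, P C) :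
    ∃ (I : Type) (_ : Countable I) (C : I → Set α),
      Pairwise (Disjoint on C) ∧ (∀ i, P (C i)) ∧ μ (⋃ i, C i)ᶜ = 0 := by
  obtain ⟨𝒞, h𝒞⟩ := exists_maximal_pairwiseDisjoint P
  have hcount : 𝒞.Countable := Measure.countable_of_pairwiseDisjoint_of_measure_pos h𝒞.prop.2
    (fun C hC => (hP C (h𝒞.prop.1 C hC)).1) fun C hC => (hP C (h𝒞.prop.1 C hC)).2
  have : Countable 𝒞 := hcount.to_subtype
  let e := (equivShrink.{0} 𝒞).symm
  refine ⟨Shrink 𝒞, Countable.of_equiv _ e.symm, fun i => e i, ?_, fun i => h𝒞.prop.1 _ (e i).2, ?_⟩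
  · exact fun i j hij => h𝒞.prop.2 (e i).2 (e j).2 (Subtype.coe_injective.ne (e.injective.ne hij))
  · rw [e.surjective.iUnion_comp (fun C : 𝒞 => (C : Set α)), ← sUnion_eq_iUnion]
    exact measure_compl_sUnion_eq_zero_of_maximal
      (fun C hC => nonempty_of_measure_ne_zero (hP C hC).2.ne') hfind h𝒞
      (.sUnion hcount fun C hC => (hP C (h𝒞.prop.1 C hC)).1)

theorem measure_eq_tsum_measure_inter {ι : Type*} [Countable ι] {C : ι → Set α}
    (hdisj : Pairwise (Disjoint on C)) (hmeas : ∀ i, MeasurableSet (C i))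
    (hfull : μ (⋃ i, C i)ᶜ = 0) {Y : Set α} (hY : MeasurableSet Y) :
    μ Y = ∑' i, μ (Y ∩ C i) := by
  rw [← measure_inter_conull hfull, inter_iUnion]
  exact measure_iUnion (fun i j hij => (hdisj hij).mono inter_subset_right inter_subset_right)
    fun i => hY.inter (hmeas i)

theorem exists_isClosed_subset_measure_pos [TopologicalSpace α] [Measure.WeaklyRegular μ]
    [IsFiniteMeasure μ] {A : Set α} (hA : MeasurableSet A) (hpos : 0 < μ A) :
    ∃ K ⊆ A, IsClosed K ∧ 0 < μ K :=
  Measure.WeaklyRegular.innerRegular_measurable ⟨hA, measure_ne_top μ A⟩ 0 hpos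

end MeasureTheory

theorem measure_decomposition_small_diameter_general
    {X : Type*} [TopologicalSpace X] [T2Space X]
    [MeasurableSpace X] [BorelSpace X]
    (d : X → X → ℝ)
    (μ : Measure X) [IsProbabilityMeasure μ] [μ.Regular]
    (δ : ℝ)
    (hsplit : ∀ C : Set X, IsClosed C → 0 < μ C →
      ∃ C' ⊆ C, IsClosed C' ∧ 0 < μ C' ∧ ∀ p ∈ C', ∀ q ∈ C', d p q ≤ δ) :
    ∃ (I : Type) (_ : Countable I) (C : I → Set X),
      (Pairwise fun i j => Disjoint (C i) (C j)) ∧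
      (∀ i, IsClosed (C i)) ∧
      (∀ i, 0 < μ (C i)) ∧
      (∀ i, ∀ p ∈ C i, ∀ q ∈ C i, d p q ≤ δ) ∧
      μ (⋃ i, C i) = 1 ∧
      (∀ Y : Set X, MeasurableSet Y →
        μ Y = ∑' i, μ (C i) * (μ (Y ∩ C i) / μ (C i))) := by
  obtain ⟨I, hI, C, hdisj, hC, hfull⟩ := exists_countable_pairwise_disjoint_conull
    (μ := μ) (fun C => IsClosed C ∧ 0 < μ C ∧ ∀ p ∈ C, ∀ q ∈ C, d p q ≤ δ)
    (fun C hC => ⟨hC.1.measurableSet, hC.2.1⟩) fun A hA hpos => by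
      obtain ⟨K, hKA, hK, hKpos⟩ := exists_isClosed_subset_measure_pos hA hpos
      obtain ⟨C', hC'K, hC'⟩ := hsplit K hK hKpos
      exact ⟨C', hC'K.trans hKA, hC'⟩
  have hmeas : ∀ i, MeasurableSet (C i) := fun i => (hC i).1.measurableSet
  refine ⟨I, hI, C, hdisj, fun i => (hC i).1, fun i => (hC i).2.1, fun i => (hC i).2.2,
    (prob_compl_eq_zero_iff (.iUnion hmeas)).1 hfull, fun Y hY => ?_⟩
  rw [measure_eq_tsum_measure_inter hdisj hmeas hfull hY]
  exact tsum_congr fun i =>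
    (ENNReal.mul_div_cancel (hC i).2.1.ne' (measure_ne_top μ (C i))).symm

/-- Abstract form of Theorem B: on a compact topometric space, if every closed set of
positive measure contains a closed subset of positive measure and diameter at most `δ`,
then `μ` decomposes as a countable weighted sum of localizations at pairwise disjoint
closed sets of diameter at most `δ`. -/
theorem measure_decomposition_small_diameter
    {X : Type*} [TopologicalSpace X] [CompactSpace X] [T2Space X]
    [MeasurableSpace X] [BorelSpace X]
    (d : X → X → ℝ)
    (hsymm : ∀ p q, d p q = d q p)
    (hzero : ∀ p q, d p q = 0 ↔ p = q)
    (htri : ∀ p q t, d p t ≤ d p q + d q t)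
    (hrefine : ∀ U : Set X, IsOpen U → ∀ p ∈ U, ∃ ε > 0, ∀ q, d p q < ε → q ∈ U)
    (hlsc : ∀ ε : ℝ, 0 < ε → IsClosed {pq : X × X | d pq.1 pq.2 ≤ ε})
    (μ : Measure X) [IsProbabilityMeasure μ] [μ.Regular]
    (δ : ℝ) (hδ : 0 < δ)
    (hsplit : ∀ C : Set X, IsClosed C → 0 < μ C →
      ∃ C' ⊆ C, IsClosed C' ∧ 0 < μ C' ∧ ∀ p ∈ C', ∀ q ∈ C', d p q ≤ δ) :
    ∃ (I : Type) (_ : Countable I) (C : I → Set X),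
      (Pairwise fun i j => Disjoint (C i) (C j)) ∧
      (∀ i, IsClosed (C i)) ∧
      (∀ i, 0 < μ (C i)) ∧
      (∀ i, ∀ p ∈ C i, ∀ q ∈ C i, d p q ≤ δ) ∧
      μ (⋃ i, C i) = 1 ∧
      (∀ Y : Set X, MeasurableSet Y →
        μ Y = ∑' i, μ (C i) * (μ (Y ∩ C i) / μ (C i))) :=
  measure_decomposition_small_diameter_general d μ δ hsplit
end

section
/- Let V* ⊆ V and W* ⊆ W be finite nonempty sets and f : V × W → [0,1]. Suppose (V*,W*) is (δ;γ,ε)-homogeneous, and let V' ⊆ V* with |V'| ≥ (1 − η)|V*| and W' ⊆ W* with |W'| ≥ (1 − η)|W*|. Then (V',W') is (δ; γ', ε')-homogeneous with γ' = (γ+η)/(1−η) and ε' = (ε+η)/(1−η). -/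
open scoped Classical

/-- The pair `(A,B)` is `(δ;γ,ε)`-homogeneous for `f` (with normalized counting measures). -/
def Homog {V W : Type*} (f : V → W → ℝ) (A : Finset V) (B : Finset W)
    (δ γ ε : ℝ) : Prop :=
  ∃ A' ⊆ A, ∃ B' ⊆ B,
    (1 - γ) * (A.card : ℝ) ≤ (A'.card : ℝ) ∧
    (1 - γ) * (B.card : ℝ) ≤ (B'.card : ℝ) ∧
    ∃ r ∈ Set.Icc (0:ℝ) 1, ∃ s ∈ Set.Icc (0:ℝ) 1,
      (∀ b ∈ B', (1 - ε) * (A.card : ℝ) ≤ ((A.filter fun a => |f a b - r| ≤ δ).card : ℝ)) ∧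
      (∀ a ∈ A', (1 - ε) * (B.card : ℝ) ≤ ((B.filter fun b => |f a b - s| ≤ δ).card : ℝ))

/-- Key arithmetic fact: if `(1-γ-η)x ≤ a`, `v ≤ x`, all nonneg, then
`(1 - (γ+η)/(1-η)) v ≤ a`. -/
lemma homog_aux (γ η x v a : ℝ) (hγ : 0 ≤ γ) (hη : 0 ≤ η) (hη1 : η < 1)
    (hx : 0 ≤ x) (ha0 : 0 ≤ a) (hvx : v ≤ x) (hv0 : 0 ≤ v)
    (ha : (1 - γ - η) * x ≤ a) :
    (1 - (γ + η) / (1 - η)) * v ≤ a := by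
  set d := (γ + η) / (1 - η) with hd
  have h1η : (0:ℝ) < 1 - η := by linarith
  by_cases h : d ≤ 1
  · have hdge : γ + η ≤ d := by
      rw [hd, le_div_iff₀ h1η]; nlinarith
    have h2 : (1 - d) * v ≤ (1 - d) * x :=
      mul_le_mul_of_nonneg_left hvx (by linarith)
    have h3 : (1 - d) * x ≤ (1 - γ - η) * x :=
      mul_le_mul_of_nonneg_right (by linarith) hx
    linarith
  · have : (1 - d) * v ≤ 0 := mul_nonpos_of_nonpos_of_nonneg (by linarith) hv0
    linarith

/-- Homogeneity is inherited by large subsets: if `(V*,W*)` is `(δ;γ,ε)`-homogeneous and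
`V' ⊆ V*`, `W' ⊆ W*` have relative size at least `1-η`, then `(V',W')` is
`(δ; (γ+η)/(1-η), (ε+η)/(1-η))`-homogeneous. -/
theorem homog_of_large_subsets {V W : Type*} (f : V → W → ℝ)
    (hf : ∀ a b, f a b ∈ Set.Icc (0:ℝ) 1)
    (δ γ ε η : ℝ) (hδ : 0 ≤ δ) (hγ : 0 ≤ γ) (hε : 0 ≤ ε) (hη : 0 ≤ η) (hη1 : η < 1)
    (Vst : Finset V) (Wst : Finset W) (hVne : Vst.Nonempty) (hWne : Wst.Nonempty)
    (hhom : Homog f Vst Wst δ γ ε)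
    (V' : Finset V) (W' : Finset W) (hV' : V' ⊆ Vst) (hW' : W' ⊆ Wst)
    (hVc : (1 - η) * (Vst.card : ℝ) ≤ (V'.card : ℝ))
    (hWc : (1 - η) * (Wst.card : ℝ) ≤ (W'.card : ℝ)) :
    Homog f V' W' δ ((γ + η) / (1 - η)) ((ε + η) / (1 - η)) := by
  obtain ⟨A', hA's, B', hB's, hA'c, hB'c, r, hr, s, hs, hBr, hAs⟩ := hhom
  have hVV : (V'.card : ℝ) ≤ Vst.card := by exact_mod_cast Finset.card_le_card hV'
  have hWW : (W'.card : ℝ) ≤ Wst.card := by exact_mod_cast Finset.card_le_card hW'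
  refine ⟨A' ∩ V', Finset.inter_subset_right, B' ∩ W', Finset.inter_subset_right, ?_, ?_,
    r, hr, s, hs, ?_, ?_⟩
  · -- |A' ∩ V'| ≥ (1-γ') |V'|
    have hinter : (A'.card : ℝ) + V'.card - Vst.card ≤ ((A' ∩ V').card : ℝ) := by
      have h1 := Finset.card_inter_add_card_union A' V'
      have h2 : (A' ∪ V').card ≤ Vst.card :=
        Finset.card_le_card (Finset.union_subset hA's hV')
      have h1' : ((A' ∩ V').card : ℝ) + (A' ∪ V').card = A'.card + V'.card := by
        exact_mod_cast h1
      have h2' : ((A' ∪ V').card : ℝ) ≤ Vst.card := by exact_mod_cast h2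
      linarith
    exact homog_aux γ η Vst.card V'.card _ hγ hη hη1 (by positivity) (by positivity)
      hVV (by positivity) (by linarith)
  · have hinter : (B'.card : ℝ) + W'.card - Wst.card ≤ ((B' ∩ W').card : ℝ) := by
      have h1 := Finset.card_inter_add_card_union B' W'
      have h2 : (B' ∪ W').card ≤ Wst.card :=
        Finset.card_le_card (Finset.union_subset hB's hW')
      have h1' : ((B' ∩ W').card : ℝ) + (B' ∪ W').card = B'.card + W'.card := by
        exact_mod_cast h1
      have h2' : ((B' ∪ W').card : ℝ) ≤ Wst.card := by exact_mod_cast h2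
      linarith
    exact homog_aux γ η Wst.card W'.card _ hγ hη hη1 (by positivity) (by positivity)
      hWW (by positivity) (by linarith)
  · intro b hb
    have hb' : b ∈ B' := Finset.mem_of_mem_inter_left hb
    have hbig := hBr b hb'
    have hsub : Vst.filter (fun a => |f a b - r| ≤ δ) ⊆
        V'.filter (fun a => |f a b - r| ≤ δ) ∪ (Vst \ V') := by
      intro a ha
      rw [Finset.mem_filter] at ha
      by_cases h : a ∈ V'
      · exact Finset.mem_union_left _ (Finset.mem_filter.mpr ⟨h, ha.2⟩)
      · exact Finset.mem_union_right _ (Finset.mem_sdiff.mpr ⟨ha.1, h⟩)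
    have hcard : ((Vst.filter (fun a => |f a b - r| ≤ δ)).card : ℝ) ≤
        ((V'.filter (fun a => |f a b - r| ≤ δ)).card : ℝ) + (Vst.card - V'.card) := by
      have h1 := Finset.card_le_card hsub
      have h2 := Finset.card_union_le (V'.filter (fun a => |f a b - r| ≤ δ)) (Vst \ V')
      have h3 : (Vst \ V').card = Vst.card - V'.card := Finset.card_sdiff_of_subset hV'
      have h4 : ((Vst \ V').card : ℝ) = Vst.card - V'.card := by
        rw [h3, Nat.cast_sub (Finset.card_le_card hV')]
      have h1' : ((Vst.filter (fun a => |f a b - r| ≤ δ)).card : ℝ) ≤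
          ((V'.filter (fun a => |f a b - r| ≤ δ)) ∪ (Vst \ V')).card := by exact_mod_cast h1
      have h2' : (((V'.filter (fun a => |f a b - r| ≤ δ)) ∪ (Vst \ V')).card : ℝ) ≤
          ((V'.filter (fun a => |f a b - r| ≤ δ)).card : ℝ) + (Vst \ V').card := by
        exact_mod_cast h2
      linarith
    exact homog_aux ε η Vst.card V'.card _ hε hη hη1 (by positivity) (by positivity)
      hVV (by positivity) (by linarith)
  · intro a ha
    have ha' : a ∈ A' := Finset.mem_of_mem_inter_left ha
    have hbig := hAs a ha'
    have hsub : Wst.filter (fun b => |f a b - s| ≤ δ) ⊆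
        W'.filter (fun b => |f a b - s| ≤ δ) ∪ (Wst \ W') := by
      intro b hbm
      rw [Finset.mem_filter] at hbm
      by_cases h : b ∈ W'
      · exact Finset.mem_union_left _ (Finset.mem_filter.mpr ⟨h, hbm.2⟩)
      · exact Finset.mem_union_right _ (Finset.mem_sdiff.mpr ⟨hbm.1, h⟩)
    have hcard : ((Wst.filter (fun b => |f a b - s| ≤ δ)).card : ℝ) ≤
        ((W'.filter (fun b => |f a b - s| ≤ δ)).card : ℝ) + (Wst.card - W'.card) := by
      have h1 := Finset.card_le_card hsub
      have h2 := Finset.card_union_le (W'.filter (fun b => |f a b - s| ≤ δ)) (Wst \ W')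
      have h4 : ((Wst \ W').card : ℝ) = Wst.card - W'.card := by
        rw [Finset.card_sdiff_of_subset hW', Nat.cast_sub (Finset.card_le_card hW')]
      have h1' : ((Wst.filter (fun b => |f a b - s| ≤ δ)).card : ℝ) ≤
          ((W'.filter (fun b => |f a b - s| ≤ δ)) ∪ (Wst \ W')).card := by exact_mod_cast h1
      have h2' : (((W'.filter (fun b => |f a b - s| ≤ δ)) ∪ (Wst \ W')).card : ℝ) ≤
          ((W'.filter (fun b => |f a b - s| ≤ δ)).card : ℝ) + (Wst \ W').card := by
        exact_mod_cast h2
      linarith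
    exact homog_aux ε η Wst.card W'.card _ hε hη hη1 (by positivity) (by positivity)
      hWW (by positivity) (by linarith)
end

section
/- Let V, W be finite nonempty sets, f : V × W → [0,1], and suppose there are partitions V = V_0 ∪ V_1 ∪ … ∪ V_m and W = W_0 ∪ W_1 ∪ … ∪ W_n with |V_0| ≤ ε|V|, |W_0| ≤ ε|W|, and for each (i,j) ∈ [m]×[n] there are r_{ij} ∈ [0,1] and W_{ij} ⊆ W_j with |W_{ij}| ≥ (1 − σ/2)|W_j| such that for all b ∈ W_{ij}, |{a ∈ V_i : |f(a,b) − r_{ij}| ≤ δ'}| ≥ (1 − σ/2)|V_i|. Define f_str(a,b) = f(a,b) if (a,b) ∈ V_i × W_j and |f(a,b) − r_{ij}| ≤ δ', f_str(a,b) = r_{ij} if (a,b) ∈ V_i × W_j and |f(a,b) − r_{ij}| > δ', and f_str(a,b) = 0 if a ∈ V_0 or b ∈ W_0; let f_err = f·1_Z where Z = (V_0 × W) ∪ (V × W_0), and f_psd = f − f_str − f_err. Then |supp(f_psd)| ≤ σ|V × W|. -/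
open scoped Classical

/-- The pseudorandom part of the stable decomposition has support of size at most
`σ |V × W|`. -/
theorem psd_part_small_support
    {V W : Type*} [Fintype V] [Fintype W] [Nonempty V] [Nonempty W]
    (f : V → W → ℝ) (hf : ∀ a b, f a b ∈ Set.Icc (0:ℝ) 1)
    (m n : ℕ) (Vp : Fin (m+1) → Finset V) (Wp : Fin (n+1) → Finset W)
    (hVdisj : ∀ i j, i ≠ j → Disjoint (Vp i) (Vp j))
    (hVcover : ∀ a : V, ∃ i, a ∈ Vp i)
    (hWdisj : ∀ i j, i ≠ j → Disjoint (Wp i) (Wp j))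
    (hWcover : ∀ b : W, ∃ j, b ∈ Wp j)
    (ε σ δ' : ℝ) (hσ : 0 ≤ σ)
    (hV0 : ((Vp 0).card : ℝ) ≤ ε * (Fintype.card V : ℝ))
    (hW0 : ((Wp 0).card : ℝ) ≤ ε * (Fintype.card W : ℝ))
    (r : Fin (m+1) → Fin (n+1) → ℝ)
    (Wij : Fin (m+1) → Fin (n+1) → Finset W)
    (hr : ∀ i j, i ≠ 0 → j ≠ 0 → r i j ∈ Set.Icc (0:ℝ) 1)
    (hWij : ∀ i j, i ≠ 0 → j ≠ 0 → Wij i j ⊆ Wp j ∧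
      (1 - σ/2) * ((Wp j).card : ℝ) ≤ ((Wij i j).card : ℝ))
    (hgood : ∀ i j, i ≠ 0 → j ≠ 0 → ∀ b ∈ Wij i j,
      (1 - σ/2) * ((Vp i).card : ℝ) ≤
        (((Vp i).filter fun a => |f a b - r i j| ≤ δ').card : ℝ))
    (fstr ferr fpsd : V → W → ℝ)
    (hstr : ∀ i j, i ≠ 0 → j ≠ 0 → ∀ a ∈ Vp i, ∀ b ∈ Wp j,
      (|f a b - r i j| ≤ δ' → fstr a b = f a b) ∧
      (δ' < |f a b - r i j| → fstr a b = r i j))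
    (hstr0 : ∀ a b, (a ∈ Vp 0 ∨ b ∈ Wp 0) → fstr a b = 0)
    (herr : ∀ a b, ferr a b = if a ∈ Vp 0 ∨ b ∈ Wp 0 then f a b else 0)
    (hpsd : ∀ a b, fpsd a b = f a b - fstr a b - ferr a b) :
    ((Finset.univ.filter fun p : V × W => fpsd p.1 p.2 ≠ 0).card : ℝ)
      ≤ σ * ((Fintype.card V : ℝ) * (Fintype.card W : ℝ)) := by
  classical
  set S := Finset.univ.filter fun p : V × W => fpsd p.1 p.2 ≠ 0 with hS
  set B : Fin (m+1) × Fin (n+1) → Finset (V × W) := fun ij =>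
    if ij.1 ≠ 0 ∧ ij.2 ≠ 0 then
      (Vp ij.1 ×ˢ Wp ij.2).filter fun p => δ' < |f p.1 p.2 - r ij.1 ij.2|
    else ∅ with hB
  have hsub : S ⊆ Finset.univ.biUnion B := by
    intro p hp
    have hp' : fpsd p.1 p.2 ≠ 0 := (Finset.mem_filter.mp hp).2
    obtain ⟨i, hi⟩ := hVcover p.1
    obtain ⟨j, hj⟩ := hWcover p.2
    by_cases h0 : i = 0 ∨ j = 0
    · exfalso
      have hz : p.1 ∈ Vp 0 ∨ p.2 ∈ Wp 0 := by
        rcases h0 with h | h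
        · left; rwa [h] at hi
        · right; rwa [h] at hj
      have h1 := hstr0 p.1 p.2 hz
      have h2 := herr p.1 p.2
      rw [if_pos hz] at h2
      apply hp'
      rw [hpsd p.1 p.2, h1, h2]; ring
    push_neg at h0
    have hnv0 : p.1 ∉ Vp 0 :=
      fun hm => (Finset.disjoint_left.mp (hVdisj i 0 h0.1)) hi hm
    have hnw0 : p.2 ∉ Wp 0 :=
      fun hm => (Finset.disjoint_left.mp (hWdisj j 0 h0.2)) hj hm
    have hbad : δ' < |f p.1 p.2 - r i j| := by
      by_contra hle
      push_neg at hle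
      have hfs := (hstr i j h0.1 h0.2 p.1 hi p.2 hj).1 hle
      have hfe := herr p.1 p.2
      rw [if_neg (by tauto)] at hfe
      apply hp'
      rw [hpsd p.1 p.2, hfs, hfe]; ring
    refine Finset.mem_biUnion.mpr ⟨(i, j), Finset.mem_univ _, ?_⟩
    have : B (i, j) = (Vp i ×ˢ Wp j).filter fun p => δ' < |f p.1 p.2 - r i j| := by
      rw [hB]; exact if_pos ⟨h0.1, h0.2⟩
    rw [this]
    exact Finset.mem_filter.mpr ⟨Finset.mem_product.mpr ⟨hi, hj⟩, hbad⟩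
  have hcard : (S.card : ℝ) ≤ ∑ ij : Fin (m+1) × Fin (n+1), ((B ij).card : ℝ) := by
    have h1 := Finset.card_le_card hsub
    have h2 := Finset.card_biUnion_le (s := (Finset.univ : Finset (Fin (m+1) × Fin (n+1)))) (t := B)
    exact_mod_cast le_trans h1 h2
  have hblock : ∀ ij : Fin (m+1) × Fin (n+1),
      ((B ij).card : ℝ) ≤ σ * ((Vp ij.1).card : ℝ) * ((Wp ij.2).card : ℝ) := by
    rintro ⟨i, j⟩
    by_cases h : i ≠ 0 ∧ j ≠ 0
    swap
    · have : B (i, j) = ∅ := by rw [hB]; exact if_neg h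
      rw [this]
      simp only [Finset.card_empty, Nat.cast_zero]
      positivity
    obtain ⟨hi0, hj0⟩ := h
    have hBij := hWij i j hi0 hj0
    have hBeq : B (i, j) = (Vp i ×ˢ Wp j).filter fun p => δ' < |f p.1 p.2 - r i j| := by
      rw [hB]; exact if_pos ⟨hi0, hj0⟩
    set g : W → Finset V := fun b => (Vp i).filter fun a => δ' < |f a b - r i j| with hg
    have hsub2 : B (i, j) ⊆ (Wp j).biUnion fun b => (g b) ×ˢ {b} := by
      intro p hp
      rw [hBeq] at hp
      obtain ⟨hmem, hbad⟩ := Finset.mem_filter.mp hp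
      obtain ⟨ha, hb⟩ := Finset.mem_product.mp hmem
      exact Finset.mem_biUnion.mpr ⟨p.2, hb, Finset.mem_product.mpr
        ⟨Finset.mem_filter.mpr ⟨ha, hbad⟩, Finset.mem_singleton_self _⟩⟩
    have hcard2 : ((B (i, j)).card : ℝ) ≤ ∑ b ∈ Wp j, ((g b).card : ℝ) := by
      have h1 := Finset.card_le_card hsub2
      have h2 := Finset.card_biUnion_le (s := Wp j) (t := fun b => (g b) ×ˢ {b})
      have h3 : ∀ b, ((g b) ×ˢ ({b} : Finset W)).card = (g b).card := by
        intro b; rw [Finset.card_product, Finset.card_singleton, mul_one]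
      rw [Finset.sum_congr rfl (fun b _ => h3 b)] at h2
      exact_mod_cast le_trans h1 h2
    -- bound for b in Wij
    have hin : ∀ b ∈ Wij i j, ((g b).card : ℝ) ≤ σ / 2 * ((Vp i).card : ℝ) := by
      intro b hb
      have hgd := hgood i j hi0 hj0 b hb
      have hsplit : ((Vp i).filter fun a => |f a b - r i j| ≤ δ').card + (g b).card
          = (Vp i).card := by
        have heq : g b = (Vp i).filter fun a => ¬ (|f a b - r i j| ≤ δ') := by
          ext a; simp [hg, not_le]
        rw [heq]
        exact Finset.card_filter_add_card_filter_not _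
      have := congrArg (fun k : ℕ => (k : ℝ)) hsplit
      push_cast at this
      linarith
    have hout : ∀ b ∈ Wp j \ Wij i j, ((g b).card : ℝ) ≤ ((Vp i).card : ℝ) := by
      intro b _
      exact_mod_cast Finset.card_filter_le _ _
    have hsumsplit : ∑ b ∈ Wp j, ((g b).card : ℝ)
        = ∑ b ∈ Wp j \ Wij i j, ((g b).card : ℝ) + ∑ b ∈ Wij i j, ((g b).card : ℝ) :=
      (Finset.sum_sdiff hBij.1).symm
    have hsum1 : ∑ b ∈ Wij i j, ((g b).card : ℝ)
        ≤ ((Wij i j).card : ℝ) * (σ / 2 * ((Vp i).card : ℝ)) := by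
      calc ∑ b ∈ Wij i j, ((g b).card : ℝ)
          ≤ ∑ _b ∈ Wij i j, σ / 2 * ((Vp i).card : ℝ) := Finset.sum_le_sum hin
        _ = ((Wij i j).card : ℝ) * (σ / 2 * ((Vp i).card : ℝ)) := by
            rw [Finset.sum_const, nsmul_eq_mul]
    have hsum2 : ∑ b ∈ Wp j \ Wij i j, ((g b).card : ℝ)
        ≤ (((Wp j).card : ℝ) - ((Wij i j).card : ℝ)) * ((Vp i).card : ℝ) := by
      have hc : ((Wp j \ Wij i j).card : ℝ) = ((Wp j).card : ℝ) - ((Wij i j).card : ℝ) := by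
        rw [Finset.card_sdiff_of_subset hBij.1]
        rw [Nat.cast_sub (Finset.card_le_card hBij.1)]
      calc ∑ b ∈ Wp j \ Wij i j, ((g b).card : ℝ)
          ≤ ∑ _b ∈ Wp j \ Wij i j, ((Vp i).card : ℝ) := Finset.sum_le_sum hout
        _ = ((Wp j \ Wij i j).card : ℝ) * ((Vp i).card : ℝ) := by
            rw [Finset.sum_const, nsmul_eq_mul]
        _ = (((Wp j).card : ℝ) - ((Wij i j).card : ℝ)) * ((Vp i).card : ℝ) := by rw [hc]
    have hWijle : ((Wij i j).card : ℝ) ≤ ((Wp j).card : ℝ) := by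
      exact_mod_cast Finset.card_le_card hBij.1
    have hVpos : (0 : ℝ) ≤ ((Vp i).card : ℝ) := Nat.cast_nonneg _
    have hWpos : (0 : ℝ) ≤ ((Wp j).card : ℝ) := Nat.cast_nonneg _
    have hkey : ((Wp j).card : ℝ) - ((Wij i j).card : ℝ) ≤ σ / 2 * ((Wp j).card : ℝ) := by
      have := hBij.2; linarith
    calc ((B (i, j)).card : ℝ) ≤ ∑ b ∈ Wp j, ((g b).card : ℝ) := hcard2
      _ = ∑ b ∈ Wp j \ Wij i j, ((g b).card : ℝ) + ∑ b ∈ Wij i j, ((g b).card : ℝ) := hsumsplit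
      _ ≤ (((Wp j).card : ℝ) - ((Wij i j).card : ℝ)) * ((Vp i).card : ℝ)
          + ((Wij i j).card : ℝ) * (σ / 2 * ((Vp i).card : ℝ)) := add_le_add hsum2 hsum1
      _ ≤ σ / 2 * ((Wp j).card : ℝ) * ((Vp i).card : ℝ)
          + ((Wp j).card : ℝ) * (σ / 2 * ((Vp i).card : ℝ)) := by
            apply add_le_add
            · exact mul_le_mul_of_nonneg_right hkey hVpos
            · apply mul_le_mul_of_nonneg_right hWijle; positivity
      _ = σ * ((Vp i).card : ℝ) * ((Wp j).card : ℝ) := by ring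
  have hVsum : (∑ i, ((Vp i).card : ℝ)) ≤ (Fintype.card V : ℝ) := by
    have h1 : ∑ i, (Vp i).card = (Finset.univ.biUnion Vp).card :=
      (Finset.card_biUnion (fun i _ j _ hij => hVdisj i j hij)).symm
    have h2 : (Finset.univ.biUnion Vp).card ≤ Fintype.card V := Finset.card_le_univ _
    exact_mod_cast h1 ▸ h2
  have hWsum : (∑ j, ((Wp j).card : ℝ)) ≤ (Fintype.card W : ℝ) := by
    have h1 : ∑ j, (Wp j).card = (Finset.univ.biUnion Wp).card :=
      (Finset.card_biUnion (fun i _ j _ hij => hWdisj i j hij)).symm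
    have h2 : (Finset.univ.biUnion Wp).card ≤ Fintype.card W := Finset.card_le_univ _
    exact_mod_cast h1 ▸ h2
  have hVnn : (0:ℝ) ≤ ∑ i, ((Vp i).card : ℝ) := Finset.sum_nonneg fun _ _ => Nat.cast_nonneg _
  have hWnn : (0:ℝ) ≤ ∑ j, ((Wp j).card : ℝ) := Finset.sum_nonneg fun _ _ => Nat.cast_nonneg _
  calc (S.card : ℝ) ≤ ∑ ij : Fin (m+1) × Fin (n+1), ((B ij).card : ℝ) := hcard
    _ ≤ ∑ ij : Fin (m+1) × Fin (n+1), σ * ((Vp ij.1).card : ℝ) * ((Wp ij.2).card : ℝ) :=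
        Finset.sum_le_sum fun ij _ => hblock ij
    _ = σ * ((∑ i, ((Vp i).card : ℝ)) * (∑ j, ((Wp j).card : ℝ))) := by
        rw [Finset.sum_mul_sum, Finset.mul_sum, Fintype.sum_prod_type]
        refine Finset.sum_congr rfl fun i _ => ?_
        rw [Finset.mul_sum]
        exact Finset.sum_congr rfl fun j _ => by ring
    _ ≤ σ * ((Fintype.card V : ℝ) * (Fintype.card W : ℝ)) := by
        apply mul_le_mul_of_nonneg_left _ hσ
        exact mul_le_mul hVsum hWsum hWnn (Nat.cast_nonneg _)
end
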